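/- Let p ≥ 1, let G be a sub-σ-algebra of F, and let ξ, η : Ω → P_p(ℝ^d) be G-measurable random probability measures. Then ω ↦ W_p^p(ξ(ω), η(ω)) is G-measurable, the family of random variables { ∫ |x−y|^p dν : ν a G-measurable random probability measure on ℝ^d × ℝ^d with marginals ξ and η almost surely } is directed downwards, its essential infimum equals W_p^p(ξ, η) almost surely, and consequently there exists a sequence (ν^n) of G-measurable random couplings of (ξ, η) such that ∫ |x−y|^p dν^n decreases almost surely to W_p^p(ξ, η). -/

import Mathlib

open MeasureTheory ProbabilityTheory Filter Topology NNReal ENNReal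

noncomputable section

abbrev Euc (d : ℕ) := EuclideanSpace ℝ (Fin d)

def HasMomentP {E : Type*} [NormedAddCommGroup E] [MeasurableSpace E] (p : ℝ) (μ : Measure E) : Prop :=
  ∫⁻ x, (‖x‖₊ : ℝ≥0∞) ^ p ∂μ ≠ ⊤

def Couplings {E : Type*} [MeasurableSpace E] (lam mu : Measure E) : Set (Measure (E × E)) :=
  {ν | IsProbabilityMeasure ν ∧ ν.map Prod.fst = lam ∧ ν.map Prod.snd = mu}

def Wpp {E : Type*} [NormedAddCommGroup E] [MeasurableSpace E] (p : ℝ)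
    (lam mu : Measure E) : ℝ≥0∞ :=
  ⨅ ν ∈ Couplings lam mu, ∫⁻ z, (‖z.1 - z.2‖₊ : ℝ≥0∞) ^ p ∂ν

/-- A `G`-measurable random probability measure on `X`. -/
def IsRandomProbMeasure {Ω X : Type*} [MeasurableSpace X]
    (G : MeasurableSpace Ω) (ν : Ω → Measure X) : Prop :=
  (∀ ω, IsProbabilityMeasure (ν ω)) ∧
  ∀ B : Set X, MeasurableSet B → Measurable[G] fun ω => ν ω B

/-- A `G`-measurable random coupling of the random measures `ξ` and `η` (marginals a.s.). -/
def IsRandomCoupling {Ω : Type*} [mΩ : MeasurableSpace Ω] {d : ℕ}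
    (P : Measure Ω) (G : MeasurableSpace Ω) (ξ η : Ω → Measure (Euc d))
    (ν : Ω → Measure (Euc d × Euc d)) : Prop :=
  IsRandomProbMeasure G ν ∧
  ∀ᵐ ω ∂P, (ν ω).map Prod.fst = ξ ω ∧ (ν ω).map Prod.snd = η ω

/-- The transport cost `∫ |x−y|^p dν` of a coupling. -/
def cost {d : ℕ} (p : ℝ) (ν : Measure (Euc d × Euc d)) : ℝ≥0∞ :=
  ∫⁻ z, (‖z.1 - z.2‖₊ : ℝ≥0∞) ^ p ∂ν

section S11sec
open Set


namespace S11
variable {d : ℕ}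

abbrev Idx (d : ℕ) := Fin d → ℤ

def cIdx (n : ℕ) (x : Euc d) : Idx d := fun k => ⌊(2:ℝ)^n * x k⌋

lemma measurable_cIdx (n : ℕ) : Measurable (cIdx (d := d) n) :=
  measurable_pi_lambda _ fun k => (measurable_const.mul (by fun_prop : Measurable fun x : Euc d => x k)).floor

def cell (n : ℕ) (v : Idx d) : Set (Euc d) := cIdx n ⁻¹' {v}

lemma measurableSet_cell (n : ℕ) (v : Idx d) : MeasurableSet (cell n v) :=
  measurable_cIdx n (measurableSet_singleton v)

lemma cell_disjoint (n : ℕ) : Pairwise (Function.onFun Disjoint fun v : Idx d => cell n v) := by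
  intro v w hvw
  simp only [Function.onFun, Set.disjoint_left]
  rintro x hx hx'
  exact hvw (hx.symm.trans hx')

lemma iUnion_cell (n : ℕ) : (⋃ v : Idx d, cell n v) = univ := by
  ext x; simp only [mem_iUnion, mem_univ, iff_true]
  exact ⟨cIdx n x, rfl⟩

lemma tsum_cell (lam : Measure (Euc d)) (n : ℕ) {B : Set (Euc d)} (hB : MeasurableSet B) :
    ∑' v : Idx d, lam (B ∩ cell n v) = lam B := by
  calc ∑' v : Idx d, lam (B ∩ cell n v)
      = lam (⋃ v, B ∩ cell n v) :=
        (measure_iUnion (fun v w hvw => ((cell_disjoint n hvw).mono inf_le_right inf_le_right))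
          (fun v => hB.inter (measurableSet_cell n v))).symm
    _ = lam B := by rw [← Set.inter_iUnion, iUnion_cell, inter_univ]

def Δn (d n : ℕ) : ℝ≥0∞ := ENNReal.ofReal ((d + 1) * (2⁻¹ : ℝ) ^ n)

lemma tendsto_Δn : Tendsto (fun n => Δn d n) atTop (𝓝 0) := by
  have : Tendsto (fun n => ((d:ℝ) + 1) * (2⁻¹ : ℝ) ^ n) atTop (𝓝 0) := by
    have h := tendsto_pow_atTop_nhds_zero_of_lt_one (by norm_num : (0:ℝ) ≤ 2⁻¹) (by norm_num)
    simpa using h.const_mul ((d:ℝ) + 1)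
  simpa [Δn, ENNReal.ofReal_zero, inv_pow] using (ENNReal.tendsto_ofReal this)

lemma diam_cell {n : ℕ} {v : Idx d} {x y : Euc d} (hx : x ∈ cell n v) (hy : y ∈ cell n v) :
    (‖x - y‖₊ : ℝ≥0∞) ≤ Δn d n := by
  have hreal : ‖x - y‖ ≤ ((d:ℝ) + 1) * (2⁻¹ : ℝ) ^ n := by
    have hk : ∀ k, |x k - y k| ≤ (2⁻¹ : ℝ) ^ n := by
      intro k
      have hfx : ⌊(2:ℝ)^n * x k⌋ = v k := congrFun hx k
      have hfy : ⌊(2:ℝ)^n * y k⌋ = v k := congrFun hy k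
      have h1 : |(2:ℝ)^n * x k - (2:ℝ)^n * y k| ≤ 1 := by
        have hax := Int.floor_le ((2:ℝ)^n * x k)
        have hay := Int.floor_le ((2:ℝ)^n * y k)
        have hbx := Int.lt_floor_add_one ((2:ℝ)^n * x k)
        have hby := Int.lt_floor_add_one ((2:ℝ)^n * y k)
        rw [hfx] at hax hbx
        rw [hfy] at hay hby
        rw [abs_le]; constructor <;> linarith
      have h2 : (2:ℝ)^n * |x k - y k| ≤ 1 := by
        rwa [← abs_of_nonneg (by positivity : (0:ℝ) ≤ (2:ℝ)^n), ← abs_mul, mul_sub]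
      have h3 : (0:ℝ) < (2:ℝ)^n := by positivity
      rw [inv_pow, ← one_div, le_div_iff₀ h3]
      linarith [h2]
    have hnorm : ‖x - y‖ = Real.sqrt (∑ k, ‖(x - y) k‖ ^ 2) := EuclideanSpace.norm_eq _
    have hb : (0:ℝ) ≤ (2⁻¹:ℝ)^n := by positivity
    have hsum : (∑ k, ‖(x - y) k‖ ^ 2) ≤ (d:ℝ) * ((2⁻¹:ℝ)^n)^2 := by
      calc (∑ k, ‖(x - y) k‖ ^ 2) ≤ ∑ _k : Fin d, ((2⁻¹:ℝ)^n)^2 := by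
            apply Finset.sum_le_sum
            intro k _
            have : ‖(x - y) k‖ = |x k - y k| := by
              rw [PiLp.sub_apply]; exact Real.norm_eq_abs _
            rw [this]
            exact pow_le_pow_left₀ (abs_nonneg _) (hk k) 2
        _ = (d:ℝ) * ((2⁻¹:ℝ)^n)^2 := by simp [Finset.sum_const, mul_comm]
    rw [hnorm]
    calc Real.sqrt (∑ k, ‖(x - y) k‖ ^ 2) ≤ Real.sqrt (((d:ℝ)+1)^2 * ((2⁻¹:ℝ)^n)^2) := by
          apply Real.sqrt_le_sqrt
          refine hsum.trans ?_
          apply mul_le_mul_of_nonneg_right _ (by positivity)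
          nlinarith [Nat.cast_nonneg (α := ℝ) d]
      _ = ((d:ℝ)+1) * (2⁻¹:ℝ)^n := by
          rw [← mul_pow, Real.sqrt_sq (by positivity)]
  calc (‖x - y‖₊ : ℝ≥0∞) = ENNReal.ofReal ‖x - y‖ := (ofReal_norm _).symm
    _ ≤ Δn d n := ENNReal.ofReal_le_ofReal hreal

end S11

namespace S11
variable {d : ℕ}

abbrev PlanT (d : ℕ) := (Idx d × Idx d) →₀ ℕ

/-- dyadic rational weights of the plan -/
def qv (N : ℕ) (a : PlanT d) (ij : Idx d × Idx d) : ℝ≥0∞ := (a ij : ℝ≥0∞) / 2 ^ N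

def rsum (N : ℕ) (a : PlanT d) (i : Idx d) : ℝ≥0∞ := ∑' j, qv N a (i, j)
def csum (N : ℕ) (a : PlanT d) (j : Idx d) : ℝ≥0∞ := ∑' i, qv N a (i, j)
def Qtot (N : ℕ) (a : PlanT d) : ℝ≥0∞ := ∑' ij, qv N a ij

def cN (N : ℕ) : ℝ≥0∞ := 1 - ((N : ℝ≥0∞) + 1)⁻¹

def tFac (n N : ℕ) (a : PlanT d) (lam mu : Measure (Euc d)) : ℝ≥0∞ :=
  cN N * ((1 : ℝ≥0∞)
    ⊓ (⨅ i, if rsum N a i = 0 then ∞ else lam (cell n i) / rsum N a i)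
    ⊓ (⨅ j, if csum N a j = 0 then ∞ else mu (cell n j) / csum N a j)
    ⊓ (Qtot N a)⁻¹)

def Pb (n : ℕ) (lam : Measure (Euc d)) (i : Idx d) : Measure (Euc d) :=
  (lam (cell n i))⁻¹ • lam.restrict (cell n i)

def mainM (n N : ℕ) (a : PlanT d) (lam mu : Measure (Euc d)) : Measure (Euc d × Euc d) :=
  Measure.sum fun ij : Idx d × Idx d =>
    (tFac n N a lam mu * qv N a ij) • (Pb n lam ij.1).prod (Pb n mu ij.2)

def lamLeft (n N : ℕ) (a : PlanT d) (lam mu : Measure (Euc d)) : Measure (Euc d) :=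
  Measure.sum fun i => (lam (cell n i) - tFac n N a lam mu * rsum N a i) • Pb n lam i

def muLeft (n N : ℕ) (a : PlanT d) (lam mu : Measure (Euc d)) : Measure (Euc d) :=
  Measure.sum fun j => (mu (cell n j) - tFac n N a lam mu * csum N a j) • Pb n mu j

def mrem (n N : ℕ) (a : PlanT d) (lam mu : Measure (Euc d)) : ℝ≥0∞ :=
  1 - tFac n N a lam mu * Qtot N a

def FF (n N : ℕ) (a : PlanT d) (lam mu : Measure (Euc d)) : Measure (Euc d × Euc d) :=
  mainM n N a lam mu +
    (mrem n N a lam mu)⁻¹ • ((lamLeft n N a lam mu).prod (muLeft n N a lam mu))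

section Structural
variable (n N : ℕ) (a : PlanT d) (lam mu : Measure (Euc d))

lemma cN_le_one : cN N ≤ 1 := tsub_le_self

lemma inv_succ_le_one : ((N : ℝ≥0∞) + 1)⁻¹ ≤ 1 := by
  rw [ENNReal.inv_le_one]
  exact le_add_self

lemma one_sub_cN : 1 - cN N = ((N : ℝ≥0∞) + 1)⁻¹ :=
  ENNReal.sub_sub_cancel ENNReal.one_ne_top (inv_succ_le_one N)

lemma tFac_le_one : tFac n N a lam mu ≤ 1 := by
  calc tFac n N a lam mu ≤ cN N * 1 := by
        apply mul_le_mul_right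
        exact le_trans inf_le_left (le_trans inf_le_left inf_le_left)
    _ ≤ 1 := by rw [mul_one]; exact cN_le_one N

lemma tFac_ne_top : tFac n N a lam mu ≠ ∞ :=
  (lt_of_le_of_lt (tFac_le_one n N a lam mu) ENNReal.one_lt_top).ne

lemma tFac_mul_Qtot_le : tFac n N a lam mu * Qtot N a ≤ cN N := by
  calc tFac n N a lam mu * Qtot N a ≤ cN N * ((Qtot N a)⁻¹ * Qtot N a) := by
        rw [← mul_assoc]
        exact mul_le_mul_left (mul_le_mul_right inf_le_right _) _
    _ ≤ cN N * 1 := mul_le_mul_right (ENNReal.inv_mul_le_one _) _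
    _ = cN N := mul_one _

lemma mrem_ge : ((N : ℝ≥0∞) + 1)⁻¹ ≤ mrem n N a lam mu := by
  rw [← one_sub_cN]
  exact tsub_le_tsub_left (tFac_mul_Qtot_le n N a lam mu) 1

lemma mrem_ne_zero : mrem n N a lam mu ≠ 0 := by
  refine fun h => ?_
  have := mrem_ge n N a lam mu
  rw [h, le_zero_iff] at this
  exact (ENNReal.inv_ne_zero.mpr (by simp)) this

lemma mrem_le_one : mrem n N a lam mu ≤ 1 := tsub_le_self

lemma mrem_ne_top : mrem n N a lam mu ≠ ∞ :=
  (lt_of_le_of_lt (mrem_le_one n N a lam mu) ENNReal.one_lt_top).ne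

lemma tFac_le_row (i : Idx d) :
    tFac n N a lam mu ≤ if rsum N a i = 0 then ∞ else lam (cell n i) / rsum N a i := by
  calc tFac n N a lam mu ≤ 1 * ((1 : ℝ≥0∞)
      ⊓ (⨅ i, if rsum N a i = 0 then ∞ else lam (cell n i) / rsum N a i)
      ⊓ (⨅ j, if csum N a j = 0 then ∞ else mu (cell n j) / csum N a j)
      ⊓ (Qtot N a)⁻¹) := mul_le_mul_left (cN_le_one N) _
    _ ≤ _ := by
        rw [one_mul]
        exact le_trans inf_le_left (le_trans inf_le_left (le_trans inf_le_right (iInf_le _ i)))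

lemma tFac_le_col (j : Idx d) :
    tFac n N a lam mu ≤ if csum N a j = 0 then ∞ else mu (cell n j) / csum N a j := by
  calc tFac n N a lam mu ≤ 1 * ((1 : ℝ≥0∞)
      ⊓ (⨅ i, if rsum N a i = 0 then ∞ else lam (cell n i) / rsum N a i)
      ⊓ (⨅ j, if csum N a j = 0 then ∞ else mu (cell n j) / csum N a j)
      ⊓ (Qtot N a)⁻¹) := mul_le_mul_left (cN_le_one N) _
    _ ≤ _ := by
        rw [one_mul]
        exact le_trans inf_le_left (le_trans inf_le_right (iInf_le _ j))

lemma tFac_rsum_le (i : Idx d) : tFac n N a lam mu * rsum N a i ≤ lam (cell n i) := by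
  by_cases hr : rsum N a i = 0
  · simp [hr]
  · have h := tFac_le_row n N a lam mu i
    rw [if_neg hr] at h
    calc tFac n N a lam mu * rsum N a i ≤ lam (cell n i) / rsum N a i * rsum N a i :=
          mul_le_mul_left h _
      _ = rsum N a i * (lam (cell n i) / rsum N a i) := mul_comm _ _
      _ ≤ lam (cell n i) := ENNReal.mul_div_le

lemma tFac_csum_le (j : Idx d) : tFac n N a lam mu * csum N a j ≤ mu (cell n j) := by
  by_cases hc : csum N a j = 0
  · simp [hc]
  · have h := tFac_le_col n N a lam mu j
    rw [if_neg hc] at h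
    calc tFac n N a lam mu * csum N a j ≤ mu (cell n j) / csum N a j * csum N a j :=
          mul_le_mul_left h _
      _ = csum N a j * (mu (cell n j) / csum N a j) := mul_comm _ _
      _ ≤ mu (cell n j) := ENNReal.mul_div_le

lemma qv_le_rsum (i j : Idx d) : qv N a (i, j) ≤ rsum N a i := ENNReal.le_tsum j
lemma qv_le_csum (i j : Idx d) : qv N a (i, j) ≤ csum N a j := ENNReal.le_tsum i

lemma tsum_rsum : ∑' i, rsum N a i = Qtot N a := (ENNReal.tsum_prod (f := fun i j => qv N a (i, j))).symm

lemma tsum_csum : ∑' j, csum N a j = Qtot N a := by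
  rw [Qtot, ENNReal.tsum_prod (f := fun i j => qv N a (i, j)), ENNReal.tsum_comm]
  rfl

end Structural
end S11

namespace S11
variable {d : ℕ}

section Masses
variable (n N : ℕ) (a : PlanT d) (lam mu : Measure (Euc d))

lemma Pb_apply (i : Idx d) {B : Set (Euc d)} (hB : MeasurableSet B) :
    Pb n lam i B = (lam (cell n i))⁻¹ * lam (B ∩ cell n i) := by
  rw [Pb, Measure.smul_apply, Measure.restrict_apply hB, smul_eq_mul]

lemma Pb_univ (i : Idx d) : Pb n lam i univ = (lam (cell n i))⁻¹ * lam (cell n i) := by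
  rw [Pb_apply n lam i MeasurableSet.univ, univ_inter]

lemma Pb_univ_le_one (i : Idx d) : Pb n lam i univ ≤ 1 := by
  rw [Pb_univ]; exact ENNReal.inv_mul_le_one _

lemma Pb_univ_eq [IsFiniteMeasure lam] (i : Idx d) (h : lam (cell n i) ≠ 0) :
    Pb n lam i univ = 1 := by
  rw [Pb_univ]; exact ENNReal.inv_mul_cancel h (measure_ne_top _ _)

lemma smul_Pb_le (i : Idx d) {c : ℝ≥0∞} (hc : c ≤ lam (cell n i)) {B : Set (Euc d)}
    (hB : MeasurableSet B) : c * Pb n lam i B ≤ lam (B ∩ cell n i) := by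
  rw [Pb_apply n lam i hB, ← mul_assoc]
  calc c * (lam (cell n i))⁻¹ * lam (B ∩ cell n i)
      ≤ lam (cell n i) * (lam (cell n i))⁻¹ * lam (B ∩ cell n i) :=
        mul_le_mul_left (mul_le_mul_left hc _) _
    _ ≤ 1 * lam (B ∩ cell n i) := mul_le_mul_left (ENNReal.mul_inv_le_one _) _
    _ = lam (B ∩ cell n i) := one_mul _

lemma lamLeft_apply {B : Set (Euc d)} (hB : MeasurableSet B) :
    lamLeft n N a lam mu B =
      ∑' i, (lam (cell n i) - tFac n N a lam mu * rsum N a i) * Pb n lam i B := by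
  rw [lamLeft, Measure.sum_apply _ hB]
  exact tsum_congr fun i => by rw [Measure.smul_apply, smul_eq_mul]

lemma muLeft_apply {B : Set (Euc d)} (hB : MeasurableSet B) :
    muLeft n N a lam mu B =
      ∑' j, (mu (cell n j) - tFac n N a lam mu * csum N a j) * Pb n mu j B := by
  rw [muLeft, Measure.sum_apply _ hB]
  exact tsum_congr fun j => by rw [Measure.smul_apply, smul_eq_mul]

lemma lamLeft_le : lamLeft n N a lam mu ≤ lam := by
  refine Measure.le_iff.mpr fun B hB => ?_
  rw [lamLeft_apply n N a lam mu hB]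
  calc ∑' i, (lam (cell n i) - tFac n N a lam mu * rsum N a i) * Pb n lam i B
      ≤ ∑' i, lam (B ∩ cell n i) :=
        ENNReal.tsum_le_tsum fun i => smul_Pb_le n lam i tsub_le_self hB
    _ = lam B := tsum_cell lam n hB

lemma muLeft_le : muLeft n N a lam mu ≤ mu := by
  refine Measure.le_iff.mpr fun B hB => ?_
  rw [muLeft_apply n N a lam mu hB]
  calc ∑' j, (mu (cell n j) - tFac n N a lam mu * csum N a j) * Pb n mu j B
      ≤ ∑' j, mu (B ∩ cell n j) :=
        ENNReal.tsum_le_tsum fun j => smul_Pb_le n mu j tsub_le_self hB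
    _ = mu B := tsum_cell mu n hB

lemma lamLeft_univ [IsProbabilityMeasure lam] :
    lamLeft n N a lam mu univ = mrem n N a lam mu := by
  have h1 : ∀ i, (lam (cell n i) - tFac n N a lam mu * rsum N a i) * Pb n lam i univ
      = lam (cell n i) - tFac n N a lam mu * rsum N a i := by
    intro i
    by_cases h : lam (cell n i) = 0
    · have : lam (cell n i) - tFac n N a lam mu * rsum N a i = 0 := by
        rw [h]; exact zero_tsub _
      rw [this, zero_mul]
    · rw [Pb_univ_eq n lam i h, mul_one]
  rw [lamLeft_apply n N a lam mu MeasurableSet.univ, tsum_congr h1]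
  have h2 : (∑' i, (lam (cell n i) - tFac n N a lam mu * rsum N a i))
      + tFac n N a lam mu * Qtot N a = 1 := by
    rw [← tsum_rsum, ← ENNReal.tsum_mul_left, ← ENNReal.tsum_add]
    calc ∑' i, ((lam (cell n i) - tFac n N a lam mu * rsum N a i) + tFac n N a lam mu * rsum N a i)
        = ∑' i, lam (cell n i) :=
          tsum_congr fun i => tsub_add_cancel_of_le (tFac_rsum_le n N a lam mu i)
      _ = lam univ := by
          have := tsum_cell lam n MeasurableSet.univ
          simpa using this
      _ = 1 := measure_univ
  have htop : tFac n N a lam mu * Qtot N a ≠ ∞ :=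
    (lt_of_le_of_lt (le_trans (tFac_mul_Qtot_le n N a lam mu) (cN_le_one N)) ENNReal.one_lt_top).ne
  exact ENNReal.eq_sub_of_add_eq htop h2

lemma muLeft_univ [IsProbabilityMeasure mu] :
    muLeft n N a lam mu univ = mrem n N a lam mu := by
  have h1 : ∀ j, (mu (cell n j) - tFac n N a lam mu * csum N a j) * Pb n mu j univ
      = mu (cell n j) - tFac n N a lam mu * csum N a j := by
    intro j
    by_cases h : mu (cell n j) = 0
    · have : mu (cell n j) - tFac n N a lam mu * csum N a j = 0 := by
        rw [h]; exact zero_tsub _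
      rw [this, zero_mul]
    · rw [Pb_univ_eq n mu j h, mul_one]
  rw [muLeft_apply n N a lam mu MeasurableSet.univ, tsum_congr h1]
  have h2 : (∑' j, (mu (cell n j) - tFac n N a lam mu * csum N a j))
      + tFac n N a lam mu * Qtot N a = 1 := by
    rw [← tsum_csum, ← ENNReal.tsum_mul_left, ← ENNReal.tsum_add]
    calc ∑' j, ((mu (cell n j) - tFac n N a lam mu * csum N a j) + tFac n N a lam mu * csum N a j)
        = ∑' j, mu (cell n j) :=
          tsum_congr fun j => tsub_add_cancel_of_le (tFac_csum_le n N a lam mu j)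
      _ = mu univ := by
          have := tsum_cell mu n MeasurableSet.univ
          simpa using this
      _ = 1 := measure_univ
  have htop : tFac n N a lam mu * Qtot N a ≠ ∞ :=
    (lt_of_le_of_lt (le_trans (tFac_mul_Qtot_le n N a lam mu) (cN_le_one N)) ENNReal.one_lt_top).ne
  exact ENNReal.eq_sub_of_add_eq htop h2

lemma tFac_le_Qinv : tFac n N a lam mu ≤ (Qtot N a)⁻¹ := by
  calc tFac n N a lam mu ≤ 1 * ((1 : ℝ≥0∞)
      ⊓ (⨅ i, if rsum N a i = 0 then ∞ else lam (cell n i) / rsum N a i)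
      ⊓ (⨅ j, if csum N a j = 0 then ∞ else mu (cell n j) / csum N a j)
      ⊓ (Qtot N a)⁻¹) := mul_le_mul_left (cN_le_one N) _
    _ ≤ _ := by rw [one_mul]; exact inf_le_right

lemma csum_le_Qtot (j : Idx d) : csum N a j ≤ Qtot N a := by
  rw [← tsum_csum]; exact ENNReal.le_tsum j

lemma rsum_le_Qtot (i : Idx d) : rsum N a i ≤ Qtot N a := by
  rw [← tsum_rsum]; exact ENNReal.le_tsum i

end Masses
end S11

namespace S11
variable {d : ℕ}


instance instSFinitePb (n : ℕ) (lam : Measure (Euc d)) [SFinite lam] (i : Idx d) :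
    SFinite (Pb n lam i) := by unfold Pb; infer_instance

instance instSFiniteLamLeft (n N : ℕ) (a : PlanT d) (lam mu : Measure (Euc d)) [SFinite lam] :
    SFinite (lamLeft n N a lam mu) := by unfold lamLeft; infer_instance

instance instSFiniteMuLeft (n N : ℕ) (a : PlanT d) (lam mu : Measure (Euc d)) [SFinite mu] :
    SFinite (muLeft n N a lam mu) := by unfold muLeft; infer_instance

section Marginals
variable (n N : ℕ) (a : PlanT d) (lam mu : Measure (Euc d))

lemma qv_pair (ij : Idx d × Idx d) : qv N a ij = qv N a (ij.1, ij.2) := by rfl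

lemma muj_ne_zero [IsFiniteMeasure mu] {ij : Idx d × Idx d} (hq : qv N a ij ≠ 0)
    (ht0 : tFac n N a lam mu ≠ 0) : mu (cell n ij.2) ≠ 0 := by
  have hcs : csum N a ij.2 ≠ 0 := by
    intro h
    apply hq
    have := qv_le_csum N a ij.1 ij.2
    rw [← qv_pair, h] at this
    exact le_zero_iff.mp this
  have hQ : Qtot N a ≠ ∞ := by
    intro h
    apply ht0
    have := tFac_le_Qinv n N a lam mu
    rw [h, ENNReal.inv_top] at this
    exact le_zero_iff.mp this
  have hcstop : csum N a ij.2 ≠ ∞ := fun h => hQ (top_le_iff.mp (h ▸ csum_le_Qtot N a ij.2))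
  have h := tFac_le_col n N a lam mu ij.2
  rw [if_neg hcs] at h
  intro hmuj
  apply ht0
  have hdiv : mu (cell n ij.2) / csum N a ij.2 = 0 := by
    rw [hmuj, ENNReal.zero_div]
  rw [hdiv] at h
  exact le_zero_iff.mp h

lemma lami_ne_zero [IsFiniteMeasure lam] {ij : Idx d × Idx d} (hq : qv N a ij ≠ 0)
    (ht0 : tFac n N a lam mu ≠ 0) : lam (cell n ij.1) ≠ 0 := by
  have hrs : rsum N a ij.1 ≠ 0 := by
    intro h
    apply hq
    have := qv_le_rsum N a ij.1 ij.2
    rw [← qv_pair, h] at this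
    exact le_zero_iff.mp this
  have hQ : Qtot N a ≠ ∞ := by
    intro h
    apply ht0
    have := tFac_le_Qinv n N a lam mu
    rw [h, ENNReal.inv_top] at this
    exact le_zero_iff.mp this
  have hrstop : rsum N a ij.1 ≠ ∞ := fun h => hQ (top_le_iff.mp (h ▸ rsum_le_Qtot N a ij.1))
  have h := tFac_le_row n N a lam mu ij.1
  rw [if_neg hrs] at h
  intro hlami
  apply ht0
  have hdiv : lam (cell n ij.1) / rsum N a ij.1 = 0 := by
    rw [hlami, ENNReal.zero_div]
  rw [hdiv] at h
  exact le_zero_iff.mp h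

variable [IsProbabilityMeasure lam] [IsProbabilityMeasure mu]

lemma FF_fst {B : Set (Euc d)} (hB : MeasurableSet B) :
    FF n N a lam mu (Prod.fst ⁻¹' B) = lam B := by
  have hBu : (Prod.fst ⁻¹' B : Set (Euc d × Euc d)) = B ×ˢ univ := by
    ext z; simp
  have hBmeas : MeasurableSet (Prod.fst ⁻¹' B : Set (Euc d × Euc d)) :=
    measurable_fst hB
  rw [FF, Measure.add_apply, Measure.smul_apply, smul_eq_mul, mainM,
    Measure.sum_apply _ hBmeas, hBu]
  have hmain : ∀ ij : Idx d × Idx d,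
      ((tFac n N a lam mu * qv N a ij) • (Pb n lam ij.1).prod (Pb n mu ij.2)) (B ×ˢ univ)
        = (tFac n N a lam mu * qv N a ij) * Pb n lam ij.1 B := by
    intro ij
    rw [Measure.smul_apply, smul_eq_mul, Measure.prod_prod]
    by_cases hq : qv N a ij = 0
    · rw [hq]; ring
    by_cases ht0 : tFac n N a lam mu = 0
    · rw [ht0]; ring
    rw [Pb_univ_eq n mu ij.2 (muj_ne_zero n N a lam mu hq ht0), mul_one, mul_assoc]
  rw [tsum_congr hmain]
  have hsum1 : ∑' ij : Idx d × Idx d, (tFac n N a lam mu * qv N a ij) * Pb n lam ij.1 B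
      = ∑' i, (tFac n N a lam mu * rsum N a i) * Pb n lam i B := by
    rw [ENNReal.tsum_prod (f := fun i j => (tFac n N a lam mu * qv N a (i, j)) * Pb n lam i B)]
    refine tsum_congr fun i => ?_
    have h : ∀ j, (tFac n N a lam mu * qv N a (i, j)) * Pb n lam i B
        = (tFac n N a lam mu * Pb n lam i B) * qv N a (i, j) := fun j => by ring
    rw [tsum_congr h, ENNReal.tsum_mul_left, rsum]
    ring
  have hleft : (lamLeft n N a lam mu).prod (muLeft n N a lam mu) (B ×ˢ univ)
      = lamLeft n N a lam mu B * mrem n N a lam mu := by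
    rw [Measure.prod_prod, muLeft_univ]
  rw [hsum1, hleft, mul_comm (lamLeft n N a lam mu B), ← mul_assoc,
    ENNReal.inv_mul_cancel (mrem_ne_zero n N a lam mu) (mrem_ne_top n N a lam mu), one_mul]
  rw [lamLeft_apply n N a lam mu hB, ← ENNReal.tsum_add]
  calc ∑' i, ((tFac n N a lam mu * rsum N a i) * Pb n lam i B
        + (lam (cell n i) - tFac n N a lam mu * rsum N a i) * Pb n lam i B)
      = ∑' i, lam (cell n i) * Pb n lam i B :=
        tsum_congr fun i => by
          rw [← add_mul, add_tsub_cancel_of_le (tFac_rsum_le n N a lam mu i)]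
    _ = ∑' i, lam (B ∩ cell n i) := by
        refine tsum_congr fun i => ?_
        by_cases h : lam (cell n i) = 0
        · have h2 : lam (B ∩ cell n i) = 0 :=
            le_zero_iff.mp (h ▸ measure_mono inter_subset_right)
          rw [h, h2, zero_mul]
        · rw [Pb_apply n lam i hB, ← mul_assoc,
            ENNReal.mul_inv_cancel h (measure_ne_top _ _), one_mul]
    _ = lam B := tsum_cell lam n hB

lemma FF_snd {B : Set (Euc d)} (hB : MeasurableSet B) :
    FF n N a lam mu (Prod.snd ⁻¹' B) = mu B := by
  have hBu : (Prod.snd ⁻¹' B : Set (Euc d × Euc d)) = univ ×ˢ B := by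
    ext z; simp
  have hBmeas : MeasurableSet (Prod.snd ⁻¹' B : Set (Euc d × Euc d)) :=
    measurable_snd hB
  rw [FF, Measure.add_apply, Measure.smul_apply, smul_eq_mul, mainM,
    Measure.sum_apply _ hBmeas, hBu]
  have hmain : ∀ ij : Idx d × Idx d,
      ((tFac n N a lam mu * qv N a ij) • (Pb n lam ij.1).prod (Pb n mu ij.2)) (univ ×ˢ B)
        = (tFac n N a lam mu * qv N a ij) * Pb n mu ij.2 B := by
    intro ij
    rw [Measure.smul_apply, smul_eq_mul, Measure.prod_prod]
    by_cases hq : qv N a ij = 0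
    · rw [hq]; ring
    by_cases ht0 : tFac n N a lam mu = 0
    · rw [ht0]; ring
    rw [Pb_univ_eq n lam ij.1 (lami_ne_zero n N a lam mu hq ht0), one_mul]
  rw [tsum_congr hmain]
  have hsum1 : ∑' ij : Idx d × Idx d, (tFac n N a lam mu * qv N a ij) * Pb n mu ij.2 B
      = ∑' j, (tFac n N a lam mu * csum N a j) * Pb n mu j B := by
    rw [ENNReal.tsum_prod (f := fun i j => (tFac n N a lam mu * qv N a (i, j)) * Pb n mu j B),
      ENNReal.tsum_comm]
    refine tsum_congr fun j => ?_
    have h : ∀ i, (tFac n N a lam mu * qv N a (i, j)) * Pb n mu j B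
        = (tFac n N a lam mu * Pb n mu j B) * qv N a (i, j) := fun i => by ring
    rw [tsum_congr h, ENNReal.tsum_mul_left, csum]
    ring
  have hleft : (lamLeft n N a lam mu).prod (muLeft n N a lam mu) (univ ×ˢ B)
      = mrem n N a lam mu * muLeft n N a lam mu B := by
    rw [Measure.prod_prod, lamLeft_univ]
  rw [hsum1, hleft, ← mul_assoc,
    ENNReal.inv_mul_cancel (mrem_ne_zero n N a lam mu) (mrem_ne_top n N a lam mu), one_mul]
  rw [muLeft_apply n N a lam mu hB, ← ENNReal.tsum_add]
  calc ∑' j, ((tFac n N a lam mu * csum N a j) * Pb n mu j B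
        + (mu (cell n j) - tFac n N a lam mu * csum N a j) * Pb n mu j B)
      = ∑' j, mu (cell n j) * Pb n mu j B :=
        tsum_congr fun j => by
          rw [← add_mul, add_tsub_cancel_of_le (tFac_csum_le n N a lam mu j)]
    _ = ∑' j, mu (B ∩ cell n j) := by
        refine tsum_congr fun j => ?_
        by_cases h : mu (cell n j) = 0
        · have h2 : mu (B ∩ cell n j) = 0 :=
            le_zero_iff.mp (h ▸ measure_mono inter_subset_right)
          rw [h, h2, zero_mul]
        · rw [Pb_apply n mu j hB, ← mul_assoc,
            ENNReal.mul_inv_cancel h (measure_ne_top _ _), one_mul]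
    _ = mu B := tsum_cell mu n hB

lemma FF_prob : IsProbabilityMeasure (FF n N a lam mu) := by
  constructor
  have h := FF_fst n N a lam mu MeasurableSet.univ
  simpa using h

lemma FF_map_fst : (FF n N a lam mu).map Prod.fst = lam := by
  ext B hB
  rw [Measure.map_apply measurable_fst hB, FF_fst n N a lam mu hB]

lemma FF_map_snd : (FF n N a lam mu).map Prod.snd = mu := by
  ext B hB
  rw [Measure.map_apply measurable_snd hB, FF_snd n N a lam mu hB]

lemma FF_mem_couplings : FF n N a lam mu ∈ Couplings lam mu :=
  ⟨FF_prob n N a lam mu, FF_map_fst n N a lam mu, FF_map_snd n N a lam mu⟩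

end Marginals
end S11

namespace S11
variable {d : ℕ}

lemma prodEval {Ω' X Y : Type*} [MeasurableSpace Ω'] [MeasurableSpace X] [MeasurableSpace Y]
    (μ : Ω' → Measure X) (ν : Ω' → Measure Y)
    (hμ1 : ∀ ω, μ ω univ ≤ 1) (hν1 : ∀ ω, ν ω univ ≤ 1)
    (hμ : Measurable μ) (hν : Measurable ν) :
    Measurable fun ω => (μ ω).prod (ν ω) := by
  let κ : Kernel Ω' X := ⟨μ, hμ⟩
  let κ' : Kernel Ω' Y := ⟨ν, hν⟩
  have hκ : IsFiniteKernel κ := ⟨⟨1, ENNReal.one_lt_top, fun ω => hμ1 ω⟩⟩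
  have hκ' : IsFiniteKernel κ' := ⟨⟨1, ENNReal.one_lt_top, fun ω => hν1 ω⟩⟩
  have h := (κ.prod κ').measurable
  have heq : ∀ ω, (κ.prod κ') ω = (μ ω).prod (ν ω) := fun ω => Kernel.prod_apply κ κ' ω
  simpa [funext heq] using h

section Meas
variable {Ω' : Type*} [MeasurableSpace Ω'] (n N : ℕ) (a : PlanT d)
  (ξ η : Ω' → Measure (Euc d))

lemma measurable_cellval (hξ : Measurable ξ) (i : Idx d) : Measurable fun ω => ξ ω (cell n i) :=
  (Measure.measurable_coe (measurableSet_cell n i)).comp hξ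

lemma measurable_Pb (hξ : Measurable ξ) (i : Idx d) : Measurable fun ω => Pb n (ξ ω) i := by
  refine Measure.measurable_of_measurable_coe _ fun B hB => ?_
  simp only [Pb_apply n _ i hB]
  exact ((measurable_cellval n ξ hξ i).inv).mul
    ((Measure.measurable_coe (hB.inter (measurableSet_cell n i))).comp hξ)

lemma measurable_tFac (hξ : Measurable ξ) (hη : Measurable η) : Measurable fun ω => tFac n N a (ξ ω) (η ω) := by
  unfold tFac
  apply Measurable.mul measurable_const
  apply Measurable.inf
  apply Measurable.inf
  apply Measurable.inf
  · exact measurable_const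
  · apply Measurable.iInf
    intro i
    by_cases h : rsum N a i = 0
    · simp only [h, if_true]; exact measurable_const
    · simp only [h, if_false]
      exact (measurable_cellval n ξ hξ i).div measurable_const
  · apply Measurable.iInf
    intro j
    by_cases h : csum N a j = 0
    · simp only [h, if_true]; exact measurable_const
    · simp only [h, if_false]
      exact (measurable_cellval n η hη j).div measurable_const
  · exact measurable_const

lemma measurable_lamLeft (hξ : Measurable ξ) (hη : Measurable η) : Measurable fun ω => lamLeft n N a (ξ ω) (η ω) := by
  refine Measure.measurable_of_measurable_coe _ fun B hB => ?_
  simp only [lamLeft_apply _ _ _ _ _ hB]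
  exact Measurable.ennreal_tsum fun i =>
    ((measurable_cellval n ξ hξ i).sub ((measurable_tFac n N a ξ η hξ hη).mul measurable_const)).mul
      ((Measure.measurable_coe hB).comp (measurable_Pb n ξ hξ i))

lemma measurable_muLeft (hξ : Measurable ξ) (hη : Measurable η) : Measurable fun ω => muLeft n N a (ξ ω) (η ω) := by
  refine Measure.measurable_of_measurable_coe _ fun B hB => ?_
  simp only [muLeft_apply _ _ _ _ _ hB]
  exact Measurable.ennreal_tsum fun j =>
    ((measurable_cellval n η hη j).sub ((measurable_tFac n N a ξ η hξ hη).mul measurable_const)).mul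
      ((Measure.measurable_coe hB).comp (measurable_Pb n η hη j))

lemma lamLeft_univ_le_one (hξp : ∀ ω, IsProbabilityMeasure (ξ ω)) : ∀ ω, lamLeft n N a (ξ ω) (η ω) univ ≤ 1 := by
  intro ω
  calc lamLeft n N a (ξ ω) (η ω) univ ≤ ξ ω univ :=
        Measure.le_iff.mp (lamLeft_le n N a (ξ ω) (η ω)) univ MeasurableSet.univ
    _ = 1 := (hξp ω).measure_univ

lemma muLeft_univ_le_one (hηp : ∀ ω, IsProbabilityMeasure (η ω)) : ∀ ω, muLeft n N a (ξ ω) (η ω) univ ≤ 1 := by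
  intro ω
  calc muLeft n N a (ξ ω) (η ω) univ ≤ η ω univ :=
        Measure.le_iff.mp (muLeft_le n N a (ξ ω) (η ω)) univ MeasurableSet.univ
    _ = 1 := (hηp ω).measure_univ

lemma measurable_FF (hξp : ∀ ω, IsProbabilityMeasure (ξ ω)) (hηp : ∀ ω, IsProbabilityMeasure (η ω)) (hξ : Measurable ξ) (hη : Measurable η) : Measurable fun ω => FF n N a (ξ ω) (η ω) := by
  have hprodPb : ∀ ij : Idx d × Idx d,
      Measurable fun ω => (Pb n (ξ ω) ij.1).prod (Pb n (η ω) ij.2) := fun ij =>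
    prodEval _ _ (fun ω => Pb_univ_le_one n (ξ ω) ij.1) (fun ω => Pb_univ_le_one n (η ω) ij.2)
      (measurable_Pb n ξ hξ ij.1) (measurable_Pb n η hη ij.2)
  have hprodLeft : Measurable fun ω =>
      (lamLeft n N a (ξ ω) (η ω)).prod (muLeft n N a (ξ ω) (η ω)) :=
    prodEval _ _ (lamLeft_univ_le_one n N a ξ η hξp) (muLeft_univ_le_one n N a ξ η hηp)
      (measurable_lamLeft n N a ξ η hξ hη) (measurable_muLeft n N a ξ η hξ hη)
  refine Measure.measurable_of_measurable_coe _ fun B hB => ?_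
  simp only [FF, mainM, mrem, Measure.add_apply, Measure.smul_apply, smul_eq_mul,
    Measure.sum_apply _ hB]
  apply Measurable.add
  · exact Measurable.ennreal_tsum fun ij =>
      ((measurable_tFac n N a ξ η hξ hη).mul measurable_const).mul
        ((Measure.measurable_coe hB).comp (hprodPb ij))
  · exact ((measurable_const.sub ((measurable_tFac n N a ξ η hξ hη).mul measurable_const)).inv).mul
      ((Measure.measurable_coe hB).comp hprodLeft)

end Meas
end S11

namespace S11
variable {d : ℕ}

section Cost
variable (p : ℝ)

/-- the integrand of the transport cost -/
def cf (z : Euc d × Euc d) : ℝ≥0∞ := (‖z.1 - z.2‖₊ : ℝ≥0∞)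

lemma continuous_cf : Continuous (cf (d := d)) :=
  ENNReal.continuous_coe.comp (continuous_fst.sub continuous_snd).nnnorm

lemma measurable_cf_rpow : Measurable fun z : Euc d × Euc d => cf z ^ p :=
  (ENNReal.continuous_rpow_const.comp (continuous_cf (d := d))).measurable

lemma cost_eq (ν : Measure (Euc d × Euc d)) : cost p ν = ∫⁻ z, cf z ^ p ∂ν := rfl

lemma cf_ne_top (z : Euc d × Euc d) : cf z ≠ ∞ := ENNReal.coe_ne_top

lemma rpow_add_le (hp0 : 0 ≤ p) (x y : ℝ≥0∞) : (x + y) ^ p ≤ 2 ^ p * (x ^ p + y ^ p) := by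
  have h1 : x + y ≤ 2 * (x ⊔ y) := by
    rw [two_mul]
    exact add_le_add le_sup_left le_sup_right
  calc (x + y) ^ p ≤ (2 * (x ⊔ y)) ^ p := ENNReal.rpow_le_rpow h1 hp0
    _ = 2 ^ p * (x ⊔ y) ^ p := ENNReal.mul_rpow_of_nonneg _ _ hp0
    _ ≤ 2 ^ p * (x ^ p + y ^ p) := by
        apply mul_le_mul_right
        rcases le_total x y with h | h
        · rw [sup_eq_right.mpr h]; exact le_add_self
        · rw [sup_eq_left.mpr h]; exact le_add_right le_rfl

lemma two_rpow_ne_top (hp0 : 0 ≤ p) : (2 : ℝ≥0∞) ^ p ≠ ∞ :=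
  (ENNReal.rpow_lt_top_of_nonneg hp0 (by norm_num)).ne

lemma two_rpow_ne_zero : (2 : ℝ≥0∞) ^ p ≠ 0 := by
  simp [ENNReal.rpow_eq_zero_iff]

/-- moment of a measure -/
def Mom (lam : Measure (Euc d)) : ℝ≥0∞ := ∫⁻ x, (‖x‖₊ : ℝ≥0∞) ^ p ∂lam

lemma measurable_norm_rpow : Measurable fun x : Euc d => (‖x‖₊ : ℝ≥0∞) ^ p :=
  (ENNReal.continuous_rpow_const.comp (ENNReal.continuous_coe.comp continuous_nnnorm)).measurable

lemma cost_prod_le (hp0 : 0 ≤ p) (α β : Measure (Euc d)) [SFinite α] [SFinite β] :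
    cost p (α.prod β) ≤ 2 ^ p * (β univ * Mom p α + α univ * Mom p β) := by
  have hpt : ∀ z : Euc d × Euc d, cf z ^ p ≤ 2 ^ p * ((‖z.1‖₊ : ℝ≥0∞) ^ p + (‖z.2‖₊ : ℝ≥0∞) ^ p) := by
    intro z
    have h1 : cf z ≤ (‖z.1‖₊ : ℝ≥0∞) + (‖z.2‖₊ : ℝ≥0∞) := by
      rw [cf, ← ENNReal.coe_add]
      exact ENNReal.coe_le_coe.mpr (nnnorm_sub_le _ _)
    exact le_trans (ENNReal.rpow_le_rpow h1 hp0) (rpow_add_le p hp0 _ _)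
  have hmf : Measurable fun z : Euc d × Euc d => (‖z.1‖₊ : ℝ≥0∞) ^ p :=
    (ENNReal.continuous_rpow_const.comp
      (ENNReal.continuous_coe.comp continuous_fst.nnnorm)).measurable
  have hmg : Measurable fun z : Euc d × Euc d => (‖z.2‖₊ : ℝ≥0∞) ^ p :=
    (ENNReal.continuous_rpow_const.comp
      (ENNReal.continuous_coe.comp continuous_snd.nnnorm)).measurable
  calc cost p (α.prod β) ≤ ∫⁻ z, 2 ^ p * ((‖z.1‖₊ : ℝ≥0∞) ^ p + (‖z.2‖₊ : ℝ≥0∞) ^ p) ∂(α.prod β) :=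
        lintegral_mono hpt
    _ = 2 ^ p * (∫⁻ z, (‖z.1‖₊ : ℝ≥0∞) ^ p ∂(α.prod β) + ∫⁻ z, (‖z.2‖₊ : ℝ≥0∞) ^ p ∂(α.prod β)) := by
        rw [lintegral_const_mul (f := fun z : Euc d × Euc d => (‖z.1‖₊ : ℝ≥0∞) ^ p + (‖z.2‖₊ : ℝ≥0∞) ^ p) _ (hmf.add hmg), lintegral_add_left hmf]
    _ = 2 ^ p * (β univ * Mom p α + α univ * Mom p β) := by
        congr 1
        congr 1
        · rw [← lintegral_map (measurable_norm_rpow p) measurable_fst, Measure.map_fst_prod,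
            lintegral_smul_measure]
          rfl
        · rw [← lintegral_map (measurable_norm_rpow p) measurable_snd, Measure.map_snd_prod,
            lintegral_smul_measure]
          rfl

lemma cost_FF_expand (n N : ℕ) (a : PlanT d) (lam mu : Measure (Euc d)) :
    cost p (FF n N a lam mu)
      = (∑' ij : Idx d × Idx d, (tFac n N a lam mu * qv N a ij)
            * cost p ((Pb n lam ij.1).prod (Pb n mu ij.2)))
        + (mrem n N a lam mu)⁻¹ * cost p ((lamLeft n N a lam mu).prod (muLeft n N a lam mu)) := by
  rw [cost_eq, FF, lintegral_add_measure, mainM, lintegral_sum_measure, lintegral_smul_measure]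
  congr 1
  exact tsum_congr fun ij => lintegral_smul_measure _ _

end Cost
end S11

namespace S11
variable {d : ℕ}

def blk (n : ℕ) (ij : Idx d × Idx d) : Set (Euc d × Euc d) := cell n ij.1 ×ˢ cell n ij.2

lemma blk_meas (n : ℕ) (ij : Idx d × Idx d) : MeasurableSet (blk n ij) :=
  (measurableSet_cell n ij.1).prod (measurableSet_cell n ij.2)

lemma blk_disj (n : ℕ) : Pairwise (Function.onFun Disjoint (blk (d := d) n)) := by
  intro ij kl hne
  simp only [Function.onFun, Set.disjoint_left]
  rintro z ⟨h1, h2⟩ ⟨h3, h4⟩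
  exact hne (Prod.ext (h1.symm.trans h3) (h2.symm.trans h4))

lemma iUnion_blk (n : ℕ) : (⋃ ij : Idx d × Idx d, blk n ij) = univ := by
  ext z
  simp only [mem_iUnion, mem_univ, iff_true]
  exact ⟨(cIdx n z.1, cIdx n z.2), rfl, rfl⟩

lemma tsum_blk (π : Measure (Euc d × Euc d)) [IsProbabilityMeasure π] (n : ℕ) :
    ∑' ij : Idx d × Idx d, π (blk n ij) = 1 := by
  rw [← measure_iUnion (blk_disj n) (blk_meas n), iUnion_blk, measure_univ]

lemma tsum_blk_fst (π : Measure (Euc d × Euc d)) (lam : Measure (Euc d))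
    (hfst : π.map Prod.fst = lam) (n : ℕ) (i : Idx d) :
    ∑' j, π (blk n (i, j)) = lam (cell n i) := by
  have hdisj : Pairwise (Function.onFun Disjoint fun j : Idx d => blk n (i, j)) := by
    intro j j' hne
    simp only [Function.onFun, Set.disjoint_left]
    rintro z ⟨_, h2⟩ ⟨_, h4⟩
    exact hne (h2.symm.trans h4)
  rw [← measure_iUnion hdisj fun j => blk_meas n (i, j)]
  have h1 : (⋃ j, blk n (i, j)) = Prod.fst ⁻¹' (cell n i) := by
    simp only [blk]
    rw [← Set.prod_iUnion, iUnion_cell, Set.prod_univ]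
  rw [h1, ← Measure.map_apply measurable_fst (measurableSet_cell n i), hfst]

lemma tsum_blk_snd (π : Measure (Euc d × Euc d)) (mu : Measure (Euc d))
    (hsnd : π.map Prod.snd = mu) (n : ℕ) (j : Idx d) :
    ∑' i, π (blk n (i, j)) = mu (cell n j) := by
  have hdisj : Pairwise (Function.onFun Disjoint fun i : Idx d => blk n (i, j)) := by
    intro i i' hne
    simp only [Function.onFun, Set.disjoint_left]
    rintro z ⟨h1, _⟩ ⟨h3, _⟩
    exact hne (h1.symm.trans h3)
  rw [← measure_iUnion hdisj fun i => blk_meas n (i, j)]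
  have h1 : (⋃ i, blk n (i, j)) = Prod.snd ⁻¹' (cell n j) := by
    simp only [blk]
    rw [← Set.iUnion_prod_const, iUnion_cell, Set.univ_prod]
  rw [h1, ← Measure.map_apply measurable_snd (measurableSet_cell n j), hsnd]

section BlockCost
variable (p : ℝ)

lemma measurable_cf_shift (c : ℝ≥0∞) :
    Measurable fun z : Euc d × Euc d => (cf z + c) ^ p :=
  (ENNReal.continuous_rpow_const.comp ((continuous_cf (d := d)).add continuous_const)).measurable

lemma Pb_compl_zero (n : ℕ) (lam : Measure (Euc d)) (i : Idx d) :
    Pb n lam i ((cell n i)ᶜ) = 0 := by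
  rw [Pb_apply n lam i (measurableSet_cell n i).compl, compl_inter_self, measure_empty, mul_zero]

lemma block_cost_le (hp0 : 0 ≤ p) (lam mu : Measure (Euc d))
    [IsProbabilityMeasure lam] [IsProbabilityMeasure mu]
    (π : Measure (Euc d × Euc d)) (n : ℕ) (ij : Idx d × Idx d) {r : ℝ≥0∞}
    (hr : r ≤ π (blk n ij)) :
    r * cost p ((Pb n lam ij.1).prod (Pb n mu ij.2))
      ≤ ∫⁻ z in blk n ij, (cf z + 2 * Δn d n) ^ p ∂π := by
  set b := (Pb n lam ij.1).prod (Pb n mu ij.2) with hbdef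
  have hnull : b ((blk n ij)ᶜ) = 0 := by
    have hsub : (blk n ij)ᶜ ⊆ ((cell n ij.1)ᶜ ×ˢ univ) ∪ (univ ×ˢ (cell n ij.2)ᶜ) := by
      intro z hz
      simp only [blk, mem_compl_iff, Set.mem_prod, not_and_or] at hz
      rcases hz with h | h
      · exact Or.inl ⟨h, mem_univ _⟩
      · exact Or.inr ⟨mem_univ _, h⟩
    refine le_zero_iff.mp (le_trans (measure_mono hsub) (le_trans (measure_union_le _ _) ?_))
    rw [hbdef, Measure.prod_prod, Measure.prod_prod, Pb_compl_zero, Pb_compl_zero]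
    simp
  have hblkcost : ∀ z' ∈ blk n ij, cost p b ≤ (cf z' + 2 * Δn d n) ^ p := by
    rintro z' ⟨hz1', hz2'⟩
    have hptw : ∀ z ∈ blk n ij, cf z ^ p ≤ (cf z' + 2 * Δn d n) ^ p := by
      rintro z ⟨hz1, hz2⟩
      apply ENNReal.rpow_le_rpow _ hp0
      have hdecomp : z.1 - z.2 = (z.1 - z'.1) + ((z'.1 - z'.2) + (z'.2 - z.2)) := by abel
      calc cf z = (‖(z.1 - z'.1) + ((z'.1 - z'.2) + (z'.2 - z.2))‖₊ : ℝ≥0∞) := by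
            rw [cf, hdecomp]
        _ ≤ (‖z.1 - z'.1‖₊ : ℝ≥0∞) + ((‖z'.1 - z'.2‖₊ : ℝ≥0∞) + (‖z'.2 - z.2‖₊ : ℝ≥0∞)) := by
            rw [← ENNReal.coe_add, ← ENNReal.coe_add]
            exact ENNReal.coe_le_coe.mpr
              (le_trans (nnnorm_add_le _ _) (add_le_add_right (nnnorm_add_le _ _) _))
        _ ≤ Δn d n + (cf z' + Δn d n) :=
            add_le_add (diam_cell hz1 hz1') (add_le_add_right (diam_cell hz2' hz2) _)
        _ = cf z' + 2 * Δn d n := by ring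
    have hmass : b (blk n ij) ≤ 1 := by
      refine le_trans (measure_mono (subset_univ _)) ?_
      rw [hbdef, ← univ_prod_univ, Measure.prod_prod]
      exact mul_le_one' (Pb_univ_le_one n lam ij.1) (Pb_univ_le_one n mu ij.2)
    calc cost p b = ∫⁻ z in blk n ij, cf z ^ p ∂b := by
          rw [cost_eq, ← lintegral_add_compl (fun z => cf z ^ p) (blk_meas n ij),
            setLIntegral_measure_zero _ _ hnull, add_zero]
      _ ≤ ∫⁻ _z in blk n ij, (cf z' + 2 * Δn d n) ^ p ∂b :=
          setLIntegral_mono measurable_const hptw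
      _ = (cf z' + 2 * Δn d n) ^ p * b (blk n ij) := setLIntegral_const _ _
      _ ≤ (cf z' + 2 * Δn d n) ^ p := by
          calc (cf z' + 2 * Δn d n) ^ p * b (blk n ij) ≤ (cf z' + 2 * Δn d n) ^ p * 1 :=
                mul_le_mul_right hmass _
            _ = _ := mul_one _
  calc r * cost p b ≤ π (blk n ij) * cost p b := mul_le_mul_left hr _
    _ = ∫⁻ _z in blk n ij, cost p b ∂π := by rw [setLIntegral_const, mul_comm]
    _ ≤ ∫⁻ z in blk n ij, (cf z + 2 * Δn d n) ^ p ∂π :=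
        setLIntegral_mono (measurable_cf_shift p _) hblkcost

end BlockCost
end S11

namespace S11
variable {d : ℕ}

section Select
variable (p : ℝ)

lemma measurable_enorm : Measurable fun x : Euc d => (‖x‖₊ : ℝ≥0∞) :=
  (ENNReal.continuous_coe.comp continuous_nnnorm).measurable

lemma exists_tail (lam : Measure (Euc d)) (hm : Mom p lam ≠ ∞) {ε : ℝ≥0∞} (hε : 0 < ε) :
    ∀ᶠ R : ℕ in atTop,
      ∫⁻ x in {x : Euc d | (R : ℝ≥0∞) < (‖x‖₊ : ℝ≥0∞)}, (‖x‖₊ : ℝ≥0∞) ^ p ∂lam < ε := by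
  set ν := lam.withDensity fun x => (‖x‖₊ : ℝ≥0∞) ^ p with hν
  set S : ℕ → Set (Euc d) := fun R => {x : Euc d | (R : ℝ≥0∞) < (‖x‖₊ : ℝ≥0∞)} with hS
  have hSmeas : ∀ R : ℕ, MeasurableSet (S R) := fun R =>
    measurableSet_lt measurable_const (measurable_enorm (d := d))
  have hanti : Antitone S := by
    intro R R' hle x hx
    have hcast : (R : ℝ≥0∞) ≤ (R' : ℝ≥0∞) := by exact_mod_cast hle
    exact lt_of_le_of_lt hcast hx
  have hempty : (⋂ R, S R) = ∅ := by
    ext x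
    simp only [mem_iInter, mem_empty_iff_false, iff_false, not_forall]
    obtain ⟨R, hR⟩ := ENNReal.exists_nat_gt (ENNReal.coe_ne_top (r := ‖x‖₊))
    exact ⟨R, by simp [S, not_lt.mpr hR.le]⟩
  have hfin : ∃ R, ν (S R) ≠ ∞ := by
    refine ⟨0, ?_⟩
    have : ν (S 0) ≤ ν univ := measure_mono (subset_univ _)
    rw [hν, withDensity_apply _ MeasurableSet.univ, Measure.restrict_univ] at this
    exact (lt_of_le_of_lt this (lt_top_iff_ne_top.mpr hm)).ne
  have htend : Tendsto (fun R => ν (S R)) atTop (𝓝 0) := by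
    have := MeasureTheory.tendsto_measure_iInter_atTop
      (μ := ν) (fun R => (hSmeas R).nullMeasurableSet) hanti hfin
    rw [hempty, measure_empty] at this
    exact this
  filter_upwards [htend.eventually_lt_const hε] with R hR
  rw [hν, withDensity_apply _ (hSmeas R)] at hR
  exact hR

lemma exists_scale (hp0 : 0 ≤ p) (π : Measure (Euc d × Euc d)) [IsProbabilityMeasure π]
    (hc : cost p π ≠ ∞) {ε : ℝ≥0∞} (hε : 0 < ε) :
    ∃ n : ℕ, ∫⁻ z, (cf z + 2 * Δn d n) ^ p ∂π ≤ cost p π + ε := by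
  have hbound_ptw : ∀ n (z : Euc d × Euc d),
      (cf z + 2 * Δn d n) ^ p ≤ (cf z + 2 * Δn d 0) ^ p := by
    intro n z
    apply ENNReal.rpow_le_rpow _ hp0
    apply add_le_add_right
    apply mul_le_mul_right
    apply ENNReal.ofReal_le_ofReal
    apply mul_le_mul_of_nonneg_left _ (by positivity)
    calc ((2:ℝ)⁻¹) ^ n ≤ 1 := pow_le_one₀ (by norm_num) (by norm_num)
      _ = (2⁻¹:ℝ) ^ (0:ℕ) := by norm_num
  have hbound_fin : ∫⁻ z, (cf z + 2 * Δn d 0) ^ p ∂π ≠ ∞ := by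
    have h1 : ∀ z : Euc d × Euc d,
        (cf z + 2 * Δn d 0) ^ p ≤ 2 ^ p * (cf z ^ p + (2 * Δn d 0) ^ p) := fun z =>
      rpow_add_le p hp0 _ _
    have h2 : ∫⁻ z, (cf z + 2 * Δn d 0) ^ p ∂π
        ≤ 2 ^ p * (cost p π + (2 * Δn d 0) ^ p) := by
      calc ∫⁻ z, (cf z + 2 * Δn d 0) ^ p ∂π
          ≤ ∫⁻ z, 2 ^ p * (cf z ^ p + (2 * Δn d 0) ^ p) ∂π := lintegral_mono h1
        _ = 2 ^ p * (cost p π + (2 * Δn d 0) ^ p) := by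
            rw [lintegral_const_mul (f := fun z : Euc d × Euc d => cf z ^ p + (2 * Δn d 0) ^ p) _ ((measurable_cf_rpow p).add measurable_const),
              lintegral_add_left (measurable_cf_rpow p), lintegral_const, measure_univ, mul_one]
            rfl
    refine (lt_of_le_of_lt h2 ?_).ne
    apply ENNReal.mul_lt_top (lt_top_iff_ne_top.mpr (two_rpow_ne_top p hp0))
    apply ENNReal.add_lt_top.mpr
    constructor
    · exact lt_top_iff_ne_top.mpr hc
    · exact ENNReal.rpow_lt_top_of_nonneg hp0
        (ENNReal.mul_ne_top (by norm_num) ENNReal.ofReal_ne_top)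
  have hlim : ∀ z : Euc d × Euc d,
      Tendsto (fun n => (cf z + 2 * Δn d n) ^ p) atTop (𝓝 (cf z ^ p)) := by
    intro z
    have h1 : Tendsto (fun n => cf z + 2 * Δn d n) atTop (𝓝 (cf z + 0)) := by
      apply Tendsto.add tendsto_const_nhds
      have := ENNReal.Tendsto.const_mul (tendsto_Δn (d := d)) (Or.inr (by norm_num : (2:ℝ≥0∞) ≠ ∞))
      simpa using this
    rw [add_zero] at h1
    exact (ENNReal.continuous_rpow_const.tendsto (cf z)).comp h1
  have htendI : Tendsto (fun n => ∫⁻ z, (cf z + 2 * Δn d n) ^ p ∂π) atTop (𝓝 (cost p π)) := by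
    rw [cost_eq]
    exact tendsto_lintegral_of_dominated_convergence _ (fun n => measurable_cf_shift p _)
      (fun n => Filter.Eventually.of_forall (hbound_ptw n)) hbound_fin
      (Filter.Eventually.of_forall hlim)
  have hlt : cost p π < cost p π + ε := ENNReal.lt_add_right hc hε.ne'
  exact (htendI.eventually_le_const hlt).exists

end Select
end S11

namespace S11
variable {d : ℕ}

abbrev Pln (d : ℕ) := ℕ × ℕ × PlanT d

lemma Wpp_le_cost (p : ℝ) (lam mu : Measure (Euc d)) {ν : Measure (Euc d × Euc d)}
    (hν : ν ∈ Couplings lam mu) : Wpp p lam mu ≤ cost p ν :=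
  iInf₂_le ν hν

lemma key (p : ℝ) (hp0 : 0 ≤ p) (lam mu : Measure (Euc d))
    [IsProbabilityMeasure lam] [IsProbabilityMeasure mu]
    (hml : Mom p lam ≠ ∞) (hmm : Mom p mu ≠ ∞) :
    (⨅ k : Pln d, cost p (FF k.1 k.2.1 k.2.2 lam mu)) = Wpp p lam mu := by
  refine le_antisymm ?_ (le_iInf fun k => Wpp_le_cost p lam mu (FF_mem_couplings k.1 k.2.1 k.2.2 lam mu))
  -- finiteness of Wpp
  have hprodC : lam.prod mu ∈ Couplings lam mu := by
    refine ⟨inferInstance, ?_, ?_⟩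
    · rw [Measure.map_fst_prod, measure_univ, one_smul]
    · rw [Measure.map_snd_prod, measure_univ, one_smul]
  have hWtop : Wpp p lam mu ≠ ∞ := by
    refine (lt_of_le_of_lt (le_trans (Wpp_le_cost p lam mu hprodC) (cost_prod_le p hp0 lam mu)) ?_).ne
    rw [measure_univ, measure_univ, one_mul, one_mul]
    exact ENNReal.mul_lt_top (lt_top_iff_ne_top.mpr (two_rpow_ne_top p hp0))
      (ENNReal.add_lt_top.mpr ⟨lt_top_iff_ne_top.mpr hml, lt_top_iff_ne_top.mpr hmm⟩)
  apply ENNReal.le_of_forall_pos_le_add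
  intro ε hε _
  have hε40 : (ε : ℝ≥0∞) / 4 ≠ 0 := by
    simp [ENNReal.div_eq_zero_iff, hε.ne']
  have hε4pos : (0 : ℝ≥0∞) < ε / 4 := pos_iff_ne_zero.mpr hε40
  -- near-optimal coupling
  have hlt : (⨅ ν ∈ Couplings lam mu, cost p ν) < Wpp p lam mu + ε / 4 := by
    have : Wpp p lam mu < Wpp p lam mu + ε / 4 := ENNReal.lt_add_right hWtop hε40
    exact lt_of_le_of_lt (le_of_eq rfl) this
  rw [iInf_lt_iff] at hlt
  obtain ⟨π, hlt⟩ := hlt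
  rw [iInf_lt_iff] at hlt
  obtain ⟨hπC, hπcost⟩ := hlt
  haveI hπP : IsProbabilityMeasure π := hπC.1
  have hπtop : cost p π ≠ ∞ := by
    refine (lt_of_lt_of_le hπcost ?_).ne
    exact le_top
  -- dyadic scale
  obtain ⟨n, hn⟩ := exists_scale p hp0 π hπtop hε4pos
  -- epsilon2
  set c2 : ℝ≥0∞ := (2 : ℝ≥0∞) ^ p with hc2
  set ε2 : ℝ≥0∞ := (ε : ℝ≥0∞) / 4 / c2 / 4 with hε2def
  have hε2pos : 0 < ε2 := by
    rw [hε2def]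
    apply ENNReal.div_pos
    · intro h
      rw [ENNReal.div_eq_zero_iff] at h
      rcases h with h | h
      · exact hε40 h
      · exact two_rpow_ne_top p hp0 h
    · norm_num
  -- tails
  obtain ⟨R, hRlam, hRmu, hR1⟩ :
      ∃ R : ℕ, (∫⁻ x in {x : Euc d | (R : ℝ≥0∞) < (‖x‖₊ : ℝ≥0∞)}, (‖x‖₊ : ℝ≥0∞) ^ p ∂lam < ε2)
        ∧ (∫⁻ x in {x : Euc d | (R : ℝ≥0∞) < (‖x‖₊ : ℝ≥0∞)}, (‖x‖₊ : ℝ≥0∞) ^ p ∂mu < ε2)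
        ∧ 1 ≤ R := by
    have h := ((exists_tail p lam hml hε2pos).and
      ((exists_tail p mu hmm hε2pos).and (eventually_ge_atTop 1))).exists
    obtain ⟨R, h1, h2, h3⟩ := h
    exact ⟨R, h1, h2, h3⟩
  set Rp : ℝ≥0∞ := ((R : ℕ) : ℝ≥0∞) ^ p with hRpdef
  have hRpos : (0 : ℝ≥0∞) < ((R : ℕ) : ℝ≥0∞) := by
    exact_mod_cast Nat.pos_of_ne_zero (by omega)
  have hRp0 : Rp ≠ 0 := by
    rw [hRpdef]
    exact (ENNReal.rpow_pos hRpos (by simp)).ne' 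
  have hRptop : Rp ≠ ∞ :=
    (ENNReal.rpow_lt_top_of_nonneg hp0 (by simp)).ne
  set e : ℝ≥0∞ := ε2 / (Rp * 6) with hedef
  have he0 : e ≠ 0 := by
    rw [hedef]
    refine (ENNReal.div_pos hε2pos.ne' ?_).ne'
    exact ENNReal.mul_ne_top hRptop (by norm_num)
  have hepos : 0 < e := pos_iff_ne_zero.mpr he0
  -- big finset of blocks
  obtain ⟨T, hT⟩ : ∃ T : Finset (Idx d × Idx d), 1 - e < ∑ ij ∈ T, π (blk n ij) := by
    have h1e : (1 : ℝ≥0∞) - e < ∑' ij : Idx d × Idx d, π (blk n ij) := by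
      rw [tsum_blk π n]
      exact ENNReal.sub_lt_self ENNReal.one_ne_top one_ne_zero he0
    rw [ENNReal.tsum_eq_iSup_sum] at h1e
    exact lt_iSup_iff.mp h1e
  -- choose N
  obtain ⟨N, hN1, hN2⟩ : ∃ N : ℕ,
      ((N : ℝ≥0∞) + 1)⁻¹ ≤ e ∧ (T.card : ℝ≥0∞) * ((2 : ℝ≥0∞) ^ N)⁻¹ ≤ e := by
    have h1 : Tendsto (fun N : ℕ => ((N : ℝ≥0∞) + 1)⁻¹) atTop (𝓝 0) := by
      have := ENNReal.tendsto_inv_nat_nhds_zero.comp (tendsto_add_atTop_nat 1)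
      refine this.congr fun N => ?_
      simp [Function.comp, Nat.cast_add]
    have h2 : Tendsto (fun N : ℕ => (T.card : ℝ≥0∞) * ((2 : ℝ≥0∞) ^ N)⁻¹) atTop (𝓝 0) := by
      have hpow : Tendsto (fun N : ℕ => ((2 : ℝ≥0∞) ^ N)⁻¹) atTop (𝓝 0) := by
        have := ENNReal.tendsto_pow_atTop_nhds_zero_of_lt_one
          (by norm_num : (2 : ℝ≥0∞)⁻¹ < 1)
        refine this.congr fun N => ?_
        rw [← ENNReal.inv_pow]
      have := ENNReal.Tendsto.const_mul hpow (Or.inr (by simp : ((T.card : ℝ≥0∞)) ≠ ∞))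
      simpa using this
    exact ((h1.eventually_le_const hepos).and (h2.eventually_le_const hepos)).exists
  -- the plan
  set g : Idx d × Idx d → ℕ :=
    fun ij => if ij ∈ T then ⌊(π (blk n ij)).toNNReal * 2 ^ N⌋₊ else 0 with hgdef
  have hgsupp : ∀ ij, g ij ≠ 0 → ij ∈ T := by
    intro ij h
    by_contra hmem
    rw [hgdef] at h
    simp [hmem] at h
  set a : PlanT d := Finsupp.onFinset T g hgsupp with hadef
  have haval : ∀ ij, (a ij : ℝ≥0∞) = (g ij : ℝ≥0∞) := fun ij => rfl
  have h2N0 : ((2 : ℝ≥0∞) ^ N) ≠ 0 := by positivity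
  have h2Ntop : ((2 : ℝ≥0∞) ^ N) ≠ ∞ := by
    exact (pow_lt_top (n := N) (by norm_num)).ne
  -- qv bounds
  have hqle : ∀ ij, qv N a ij ≤ π (blk n ij) := by
    intro ij
    rw [qv, haval]
    by_cases hmem : ij ∈ T
    · rw [hgdef]
      simp only [hmem, if_true]
      rw [ENNReal.div_le_iff_le_mul (Or.inl h2N0) (Or.inl h2Ntop)]
      have h1 : ((⌊(π (blk n ij)).toNNReal * 2 ^ N⌋₊ : ℝ≥0) : ℝ≥0∞)
          ≤ (((π (blk n ij)).toNNReal * 2 ^ N : ℝ≥0) : ℝ≥0∞) :=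
        ENNReal.coe_le_coe.mpr (Nat.floor_le (by positivity))
      have h2 : (((π (blk n ij)).toNNReal * 2 ^ N : ℝ≥0) : ℝ≥0∞)
          = π (blk n ij) * 2 ^ N := by
        rw [ENNReal.coe_mul, ENNReal.coe_toNNReal (measure_ne_top π _)]
        norm_num
      calc ((⌊(π (blk n ij)).toNNReal * 2 ^ N⌋₊ : ℕ) : ℝ≥0∞)
          = ((⌊(π (blk n ij)).toNNReal * 2 ^ N⌋₊ : ℝ≥0) : ℝ≥0∞) := by
            norm_cast
        _ ≤ π (blk n ij) * 2 ^ N := h2 ▸ h1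
    · rw [hgdef]
      simp [hmem]
  have hqge : ∀ ij ∈ T, π (blk n ij) ≤ qv N a ij + ((2 : ℝ≥0∞) ^ N)⁻¹ := by
    intro ij hmem
    rw [qv, haval, hgdef]
    simp only [hmem, if_true]
    have h1 : π (blk n ij) * 2 ^ N
        ≤ ((⌊(π (blk n ij)).toNNReal * 2 ^ N⌋₊ : ℕ) : ℝ≥0∞) + 1 := by
      have h2 : (((π (blk n ij)).toNNReal * 2 ^ N : ℝ≥0) : ℝ≥0∞)
          ≤ ((⌊(π (blk n ij)).toNNReal * 2 ^ N⌋₊ : ℝ≥0) : ℝ≥0∞) + 1 := by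
        rw [← ENNReal.coe_one, ← ENNReal.coe_add]
        exact ENNReal.coe_le_coe.mpr (Nat.lt_floor_add_one _).le
      have h3 : (((π (blk n ij)).toNNReal * 2 ^ N : ℝ≥0) : ℝ≥0∞) = π (blk n ij) * 2 ^ N := by
        rw [ENNReal.coe_mul, ENNReal.coe_toNNReal (measure_ne_top π _)]
        norm_num
      rw [h3] at h2
      exact_mod_cast h2
    have h4 : π (blk n ij) ≤ (((⌊(π (blk n ij)).toNNReal * 2 ^ N⌋₊ : ℕ) : ℝ≥0∞) + 1) / 2 ^ N := by
      rw [ENNReal.le_div_iff_mul_le (Or.inl h2N0) (Or.inl h2Ntop)]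
      exact h1
    calc π (blk n ij) ≤ (((⌊(π (blk n ij)).toNNReal * 2 ^ N⌋₊ : ℕ) : ℝ≥0∞) + 1) / 2 ^ N := h4
      _ = ((⌊(π (blk n ij)).toNNReal * 2 ^ N⌋₊ : ℕ) : ℝ≥0∞) / 2 ^ N + 1 / 2 ^ N :=
          ENNReal.add_div
      _ = ((⌊(π (blk n ij)).toNNReal * 2 ^ N⌋₊ : ℕ) : ℝ≥0∞) / 2 ^ N + ((2 : ℝ≥0∞) ^ N)⁻¹ := by
          rw [one_div]
  -- row and column sums
  have hrs : ∀ i, rsum N a i ≤ lam (cell n i) := by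
    intro i
    calc rsum N a i ≤ ∑' j, π (blk n (i, j)) :=
          ENNReal.tsum_le_tsum fun j => hqle (i, j)
      _ = lam (cell n i) := tsum_blk_fst π lam hπC.2.1 n i
  have hcs : ∀ j, csum N a j ≤ mu (cell n j) := by
    intro j
    calc csum N a j ≤ ∑' i, π (blk n (i, j)) :=
          ENNReal.tsum_le_tsum fun i => hqle (i, j)
      _ = mu (cell n j) := tsum_blk_snd π mu hπC.2.2 n j
  have hQle1 : Qtot N a ≤ 1 := by
    calc Qtot N a ≤ ∑' ij : Idx d × Idx d, π (blk n ij) := ENNReal.tsum_le_tsum hqle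
      _ = 1 := tsum_blk π n
  -- t-factor equals cN
  have htF : tFac n N a lam mu = cN N := by
    rw [tFac]
    have h1 : (1 : ℝ≥0∞) ≤ ⨅ i, if rsum N a i = 0 then ∞ else lam (cell n i) / rsum N a i := by
      refine le_iInf fun i => ?_
      by_cases h : rsum N a i = 0
      · simp [h]
      · rw [if_neg h, ENNReal.le_div_iff_mul_le (Or.inl h) (Or.inr (measure_ne_top lam _)), one_mul]
        exact hrs i
    have h2 : (1 : ℝ≥0∞) ≤ ⨅ j, if csum N a j = 0 then ∞ else mu (cell n j) / csum N a j := by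
      refine le_iInf fun j => ?_
      by_cases h : csum N a j = 0
      · simp [h]
      · rw [if_neg h, ENNReal.le_div_iff_mul_le (Or.inl h) (Or.inr (measure_ne_top mu _)), one_mul]
        exact hcs j
    have h3 : (1 : ℝ≥0∞) ≤ (Qtot N a)⁻¹ := ENNReal.one_le_inv.mpr hQle1
    rw [inf_eq_left.mpr h1, inf_eq_left.mpr h2, inf_eq_left.mpr h3, mul_one]
  -- Qtot lower bound
  have hQge : 1 - 2 * e ≤ Qtot N a := by
    rw [tsub_le_iff_right]
    have h1 : ∑ ij ∈ T, π (blk n ij) ≤ Qtot N a + (T.card : ℝ≥0∞) * ((2 : ℝ≥0∞) ^ N)⁻¹ := by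
      calc ∑ ij ∈ T, π (blk n ij)
          ≤ ∑ ij ∈ T, (qv N a ij + ((2 : ℝ≥0∞) ^ N)⁻¹) := Finset.sum_le_sum hqge
        _ = (∑ ij ∈ T, qv N a ij) + (T.card : ℝ≥0∞) * ((2 : ℝ≥0∞) ^ N)⁻¹ := by
            rw [Finset.sum_add_distrib, Finset.sum_const, nsmul_eq_mul]
        _ ≤ Qtot N a + (T.card : ℝ≥0∞) * ((2 : ℝ≥0∞) ^ N)⁻¹ :=
            add_le_add_left (ENNReal.sum_le_tsum T) _
    calc (1 : ℝ≥0∞) ≤ (∑ ij ∈ T, π (blk n ij)) + e := by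
          rw [← tsub_le_iff_right]
          exact hT.le
      _ ≤ (Qtot N a + (T.card : ℝ≥0∞) * ((2 : ℝ≥0∞) ^ N)⁻¹) + e := add_le_add_left h1 _
      _ ≤ (Qtot N a + e) + e := add_le_add_left (add_le_add_right hN2 _) _
      _ = Qtot N a + 2 * e := by ring
  -- mrem small
  have hmrem3e : mrem n N a lam mu ≤ 3 * e := by
    rw [mrem, htF, tsub_le_iff_right]
    have hsplit : cN N + ((N : ℝ≥0∞) + 1)⁻¹ = 1 :=
      tsub_add_cancel_of_le (inv_succ_le_one N)
    have hkey2 : Qtot N a ≤ cN N * Qtot N a + e := by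
      calc Qtot N a = (cN N + ((N : ℝ≥0∞) + 1)⁻¹) * Qtot N a := by rw [hsplit, one_mul]
        _ = cN N * Qtot N a + ((N : ℝ≥0∞) + 1)⁻¹ * Qtot N a := by ring
        _ ≤ cN N * Qtot N a + ((N : ℝ≥0∞) + 1)⁻¹ * 1 :=
            add_le_add_right (mul_le_mul_right hQle1 _) _
        _ ≤ cN N * Qtot N a + e := by rw [mul_one]; exact add_le_add_right hN1 _
    calc (1 : ℝ≥0∞) ≤ Qtot N a + 2 * e := tsub_le_iff_right.mp hQge
      _ ≤ (cN N * Qtot N a + e) + 2 * e := add_le_add_left hkey2 _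
      _ = 3 * e + cN N * Qtot N a := by ring
  -- leftover moments
  have hmomL : Mom p (lamLeft n N a lam mu) ≤ Rp * mrem n N a lam mu + ε2 := by
    set S : Set (Euc d) := {x : Euc d | ((R : ℕ) : ℝ≥0∞) < (‖x‖₊ : ℝ≥0∞)} with hSdef
    have hSmeas : MeasurableSet S := measurableSet_lt measurable_const (measurable_enorm (d := d))
    rw [Mom, ← lintegral_add_compl (fun x => (‖x‖₊ : ℝ≥0∞) ^ p) hSmeas]
    have htail : ∫⁻ x in S, (‖x‖₊ : ℝ≥0∞) ^ p ∂(lamLeft n N a lam mu) ≤ ε2 := by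
      calc ∫⁻ x in S, (‖x‖₊ : ℝ≥0∞) ^ p ∂(lamLeft n N a lam mu)
          ≤ ∫⁻ x in S, (‖x‖₊ : ℝ≥0∞) ^ p ∂lam :=
            lintegral_mono' (Measure.restrict_mono (subset_refl S) (lamLeft_le n N a lam mu))
              (le_refl _)
        _ ≤ ε2 := hRlam.le
    have hbody : ∫⁻ x in Sᶜ, (‖x‖₊ : ℝ≥0∞) ^ p ∂(lamLeft n N a lam mu)
        ≤ Rp * mrem n N a lam mu := by
      calc ∫⁻ x in Sᶜ, (‖x‖₊ : ℝ≥0∞) ^ p ∂(lamLeft n N a lam mu)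
          ≤ ∫⁻ _x in Sᶜ, Rp ∂(lamLeft n N a lam mu) := by
            refine setLIntegral_mono measurable_const fun x hx => ?_
            rw [hRpdef]
            exact ENNReal.rpow_le_rpow (not_lt.mp hx) hp0
        _ = Rp * lamLeft n N a lam mu Sᶜ := setLIntegral_const _ _
        _ ≤ Rp * lamLeft n N a lam mu univ := mul_le_mul_right (measure_mono (subset_univ _)) _
        _ = Rp * mrem n N a lam mu := by rw [lamLeft_univ]
    calc (∫⁻ x in S, (‖x‖₊ : ℝ≥0∞) ^ p ∂(lamLeft n N a lam mu))
          + ∫⁻ x in Sᶜ, (‖x‖₊ : ℝ≥0∞) ^ p ∂(lamLeft n N a lam mu)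
        ≤ ε2 + Rp * mrem n N a lam mu := add_le_add htail hbody
      _ = Rp * mrem n N a lam mu + ε2 := add_comm _ _
  have hmomM : Mom p (muLeft n N a lam mu) ≤ Rp * mrem n N a lam mu + ε2 := by
    set S : Set (Euc d) := {x : Euc d | ((R : ℕ) : ℝ≥0∞) < (‖x‖₊ : ℝ≥0∞)} with hSdef
    have hSmeas : MeasurableSet S := measurableSet_lt measurable_const (measurable_enorm (d := d))
    rw [Mom, ← lintegral_add_compl (fun x => (‖x‖₊ : ℝ≥0∞) ^ p) hSmeas]
    have htail : ∫⁻ x in S, (‖x‖₊ : ℝ≥0∞) ^ p ∂(muLeft n N a lam mu) ≤ ε2 := by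
      calc ∫⁻ x in S, (‖x‖₊ : ℝ≥0∞) ^ p ∂(muLeft n N a lam mu)
          ≤ ∫⁻ x in S, (‖x‖₊ : ℝ≥0∞) ^ p ∂mu :=
            lintegral_mono' (Measure.restrict_mono (subset_refl S) (muLeft_le n N a lam mu))
              (le_refl _)
        _ ≤ ε2 := hRmu.le
    have hbody : ∫⁻ x in Sᶜ, (‖x‖₊ : ℝ≥0∞) ^ p ∂(muLeft n N a lam mu)
        ≤ Rp * mrem n N a lam mu := by
      calc ∫⁻ x in Sᶜ, (‖x‖₊ : ℝ≥0∞) ^ p ∂(muLeft n N a lam mu)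
          ≤ ∫⁻ _x in Sᶜ, Rp ∂(muLeft n N a lam mu) := by
            refine setLIntegral_mono measurable_const fun x hx => ?_
            rw [hRpdef]
            exact ENNReal.rpow_le_rpow (not_lt.mp hx) hp0
        _ = Rp * muLeft n N a lam mu Sᶜ := setLIntegral_const _ _
        _ ≤ Rp * muLeft n N a lam mu univ := mul_le_mul_right (measure_mono (subset_univ _)) _
        _ = Rp * mrem n N a lam mu := by rw [muLeft_univ]
    calc (∫⁻ x in S, (‖x‖₊ : ℝ≥0∞) ^ p ∂(muLeft n N a lam mu))
          + ∫⁻ x in Sᶜ, (‖x‖₊ : ℝ≥0∞) ^ p ∂(muLeft n N a lam mu)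
        ≤ ε2 + Rp * mrem n N a lam mu := add_le_add htail hbody
      _ = Rp * mrem n N a lam mu + ε2 := add_comm _ _
  have hRpm : Rp * mrem n N a lam mu ≤ ε2 := by
    calc Rp * mrem n N a lam mu ≤ Rp * (3 * e) := mul_le_mul_right hmrem3e _
      _ ≤ Rp * 6 * e := by
          rw [mul_assoc]
          exact mul_le_mul_right (mul_le_mul_left (by norm_num) e) Rp
      _ = Rp * 6 * (ε2 / (Rp * 6)) := by rw [hedef]
      _ ≤ ε2 := mul_div_le
  have hmomL2 : Mom p (lamLeft n N a lam mu) ≤ 2 * ε2 :=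
    le_trans hmomL (by rw [two_mul]; exact add_le_add_left hRpm _)
  have hmomM2 : Mom p (muLeft n N a lam mu) ≤ 2 * ε2 :=
    le_trans hmomM (by rw [two_mul]; exact add_le_add_left hRpm _)
  -- leftover cost
  have hleftcost : (mrem n N a lam mu)⁻¹
      * cost p ((lamLeft n N a lam mu).prod (muLeft n N a lam mu)) ≤ (ε : ℝ≥0∞) / 4 := by
    have h1 : cost p ((lamLeft n N a lam mu).prod (muLeft n N a lam mu))
        ≤ c2 * (mrem n N a lam mu * (Mom p (lamLeft n N a lam mu) + Mom p (muLeft n N a lam mu))) := by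
      calc cost p ((lamLeft n N a lam mu).prod (muLeft n N a lam mu))
          ≤ 2 ^ p * (muLeft n N a lam mu univ * Mom p (lamLeft n N a lam mu)
              + lamLeft n N a lam mu univ * Mom p (muLeft n N a lam mu)) :=
            cost_prod_le p hp0 _ _
        _ = c2 * (mrem n N a lam mu * (Mom p (lamLeft n N a lam mu) + Mom p (muLeft n N a lam mu))) := by
            rw [lamLeft_univ, muLeft_univ, hc2]; ring
    calc (mrem n N a lam mu)⁻¹ * cost p ((lamLeft n N a lam mu).prod (muLeft n N a lam mu))
        ≤ (mrem n N a lam mu)⁻¹ * (c2 * (mrem n N a lam mu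
            * (Mom p (lamLeft n N a lam mu) + Mom p (muLeft n N a lam mu)))) :=
          mul_le_mul_right h1 _
      _ = ((mrem n N a lam mu)⁻¹ * mrem n N a lam mu) * (c2
            * (Mom p (lamLeft n N a lam mu) + Mom p (muLeft n N a lam mu))) := by ring
      _ ≤ 1 * (c2 * (Mom p (lamLeft n N a lam mu) + Mom p (muLeft n N a lam mu))) :=
          mul_le_mul_left (ENNReal.inv_mul_le_one _) _
      _ = c2 * (Mom p (lamLeft n N a lam mu) + Mom p (muLeft n N a lam mu)) := one_mul _
      _ ≤ c2 * (2 * ε2 + 2 * ε2) := mul_le_mul_right (add_le_add hmomL2 hmomM2) _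
      _ = c2 * (4 * ((ε : ℝ≥0∞) / 4 / c2 / 4)) := by rw [hε2def]; ring
      _ ≤ c2 * ((ε : ℝ≥0∞) / 4 / c2) := mul_le_mul_right mul_div_le _
      _ ≤ (ε : ℝ≥0∞) / 4 := mul_div_le
  -- main cost
  have hmaincost : (∑' ij : Idx d × Idx d, (tFac n N a lam mu * qv N a ij)
        * cost p ((Pb n lam ij.1).prod (Pb n mu ij.2)))
      ≤ cost p π + (ε : ℝ≥0∞) / 4 := by
    have hzero : ∀ ij ∉ T, (tFac n N a lam mu * qv N a ij)
        * cost p ((Pb n lam ij.1).prod (Pb n mu ij.2)) = 0 := by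
      intro ij hmem
      have : a ij = 0 := by
        by_contra h
        exact hmem (hgsupp ij h)
      rw [qv, haval, hgdef]
      simp [hmem]
    rw [tsum_eq_sum hzero]
    calc ∑ ij ∈ T, (tFac n N a lam mu * qv N a ij)
          * cost p ((Pb n lam ij.1).prod (Pb n mu ij.2))
        ≤ ∑ ij ∈ T, ∫⁻ z in blk n ij, (cf z + 2 * Δn d n) ^ p ∂π := by
          refine Finset.sum_le_sum fun ij _ => ?_
          refine block_cost_le p hp0 lam mu π n ij ?_
          calc tFac n N a lam mu * qv N a ij ≤ 1 * qv N a ij :=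
                mul_le_mul_left (tFac_le_one n N a lam mu) _
            _ = qv N a ij := one_mul _
            _ ≤ π (blk n ij) := hqle ij
      _ ≤ ∑' ij : Idx d × Idx d, ∫⁻ z in blk n ij, (cf z + 2 * Δn d n) ^ p ∂π :=
          ENNReal.sum_le_tsum T
      _ = ∫⁻ z in ⋃ ij : Idx d × Idx d, blk n ij, (cf z + 2 * Δn d n) ^ p ∂π :=
          (lintegral_iUnion (blk_meas n) (blk_disj n) _).symm
      _ = ∫⁻ z, (cf z + 2 * Δn d n) ^ p ∂π := by rw [iUnion_blk, Measure.restrict_univ]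
      _ ≤ cost p π + (ε : ℝ≥0∞) / 4 := hn
  -- total
  refine le_trans (iInf_le _ ((n, N, a) : Pln d)) ?_
  rw [cost_FF_expand]
  calc (∑' ij : Idx d × Idx d, (tFac n N a lam mu * qv N a ij)
          * cost p ((Pb n lam ij.1).prod (Pb n mu ij.2)))
        + (mrem n N a lam mu)⁻¹ * cost p ((lamLeft n N a lam mu).prod (muLeft n N a lam mu))
      ≤ (cost p π + (ε : ℝ≥0∞) / 4) + (ε : ℝ≥0∞) / 4 := add_le_add hmaincost hleftcost
    _ ≤ ((Wpp p lam mu + (ε : ℝ≥0∞) / 4) + (ε : ℝ≥0∞) / 4) + (ε : ℝ≥0∞) / 4 :=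
        add_le_add_left (add_le_add_left hπcost.le _) _
    _ ≤ Wpp p lam mu + (ε : ℝ≥0∞) := by
        rw [add_assoc, add_assoc]
        apply add_le_add_right
        have h44 : (ε : ℝ≥0∞) / 4 * 4 = ε := ENNReal.div_mul_cancel (by norm_num) (by norm_num)
        calc (ε : ℝ≥0∞) / 4 + ((ε : ℝ≥0∞) / 4 + (ε : ℝ≥0∞) / 4)
            ≤ (ε : ℝ≥0∞) / 4 + ((ε : ℝ≥0∞) / 4 + ((ε : ℝ≥0∞) / 4 + (ε : ℝ≥0∞) / 4)) :=
              add_le_add_right (add_le_add_right (le_add_self) _) _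
          _ = (ε : ℝ≥0∞) / 4 * 4 := by ring
          _ = ε := h44

end S11

end S11sec

/-- `ω ↦ W_p^p(ξ(ω), η(ω))` is `G`-measurable; the family of costs of `G`-measurable random
couplings of `(ξ, η)` is directed downwards; its essential infimum is `W_p^p(ξ, η)` a.s.;
and there is a sequence of `G`-measurable random couplings whose costs decrease a.s. to
`W_p^p(ξ, η)`. -/
theorem stmt11 {Ω : Type*} [mΩ : MeasurableSpace Ω] {d : ℕ}
    (P : Measure Ω) [IsProbabilityMeasure P]
    (G : MeasurableSpace Ω) (hG : G ≤ mΩ)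
    (p : ℝ) (hp : 1 ≤ p)
    (ξ η : Ω → Measure (Euc d))
    (hξ : IsRandomProbMeasure G ξ) (hη : IsRandomProbMeasure G η)
    (hmξ : ∀ ω, HasMomentP p (ξ ω)) (hmη : ∀ ω, HasMomentP p (η ω)) :
    Measurable[G] (fun ω => Wpp p (ξ ω) (η ω)) ∧
    (∀ ν1 ν2 : Ω → Measure (Euc d × Euc d),
      @IsRandomCoupling Ω mΩ d P G ξ η ν1 → @IsRandomCoupling Ω mΩ d P G ξ η ν2 →
      ∃ ν3 : Ω → Measure (Euc d × Euc d), @IsRandomCoupling Ω mΩ d P G ξ η ν3 ∧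
        ∀ᵐ ω ∂P, cost p (ν3 ω) ≤ cost p (ν1 ω) ⊓ cost p (ν2 ω)) ∧
    (∀ ν : Ω → Measure (Euc d × Euc d), @IsRandomCoupling Ω mΩ d P G ξ η ν →
      ∀ᵐ ω ∂P, Wpp p (ξ ω) (η ω) ≤ cost p (ν ω)) ∧
    (∀ g : Ω → ℝ≥0∞,
      (∀ ν : Ω → Measure (Euc d × Euc d), @IsRandomCoupling Ω mΩ d P G ξ η ν →
        ∀ᵐ ω ∂P, g ω ≤ cost p (ν ω)) →
      ∀ᵐ ω ∂P, g ω ≤ Wpp p (ξ ω) (η ω)) ∧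
    (∃ ν : ℕ → Ω → Measure (Euc d × Euc d),
      (∀ n, @IsRandomCoupling Ω mΩ d P G ξ η (ν n)) ∧
      ∀ᵐ ω ∂P, Antitone (fun n => cost p (ν n ω)) ∧
        Tendsto (fun n => cost p (ν n ω)) atTop (𝓝 (Wpp p (ξ ω) (η ω)))) := by
  classical
  have hξm : Measurable[G] ξ := Measure.measurable_of_measurable_coe _ fun B hB => hξ.2 B hB
  have hηm : Measurable[G] η := Measure.measurable_of_measurable_coe _ fun B hB => hη.2 B hB
  have hp0 : (0 : ℝ) ≤ p := le_trans zero_le_one hp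
  set nu : S11.Pln d → Ω → Measure (Euc d × Euc d) :=
    fun k ω => S11.FF k.1 k.2.1 k.2.2 (ξ ω) (η ω) with hnudef
  have hnum : ∀ k, Measurable[G] (nu k) := fun k =>
    S11.measurable_FF k.1 k.2.1 k.2.2 ξ η hξ.1 hη.1 hξm hηm
  have hnuP : ∀ k ω, IsProbabilityMeasure (nu k ω) := fun k ω => by
    haveI := hξ.1 ω; haveI := hη.1 ω
    exact S11.FF_prob k.1 k.2.1 k.2.2 (ξ ω) (η ω)
  have hnufst : ∀ k ω, (nu k ω).map Prod.fst = ξ ω := fun k ω => by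
    haveI := hξ.1 ω; haveI := hη.1 ω
    exact S11.FF_map_fst k.1 k.2.1 k.2.2 (ξ ω) (η ω)
  have hnusnd : ∀ k ω, (nu k ω).map Prod.snd = η ω := fun k ω => by
    haveI := hξ.1 ω; haveI := hη.1 ω
    exact S11.FF_map_snd k.1 k.2.1 k.2.2 (ξ ω) (η ω)
  have hnuRC : ∀ k, @IsRandomCoupling Ω mΩ d P G ξ η (nu k) := fun k =>
    ⟨⟨fun ω => hnuP k ω, fun B hB => (Measure.measurable_coe hB).comp (hnum k)⟩,
      Filter.Eventually.of_forall fun ω => ⟨hnufst k ω, hnusnd k ω⟩⟩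
  have hcostm : ∀ (ν : Ω → Measure (Euc d × Euc d)), Measurable[G] ν →
      Measurable[G] fun ω => cost p (ν ω) := fun ν hν =>
    (Measure.measurable_lintegral (S11.measurable_cf_rpow p)).comp hν
  have hcostRC : ∀ (ν : Ω → Measure (Euc d × Euc d)), @IsRandomCoupling Ω mΩ d P G ξ η ν →
      Measurable[G] fun ω => cost p (ν ω) := fun ν hν =>
    hcostm ν (Measure.measurable_of_measurable_coe _ fun B hB => hν.1.2 B hB)
  have hkey : ∀ ω, (⨅ k : S11.Pln d, cost p (nu k ω)) = Wpp p (ξ ω) (η ω) := fun ω => by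
    haveI := hξ.1 ω; haveI := hη.1 ω
    exact S11.key p hp0 (ξ ω) (η ω) (hmξ ω) (hmη ω)
  refine ⟨?_, ?_, ?_, ?_, ?_⟩
  · have heq : (fun ω => Wpp p (ξ ω) (η ω)) = fun ω => ⨅ k : S11.Pln d, cost p (nu k ω) :=
      funext fun ω => (hkey ω).symm
    rw [heq]
    exact Measurable.iInf fun k => hcostm (nu k) (hnum k)
  · intro ν1 ν2 h1 h2
    have hc1 := hcostRC ν1 h1
    have hc2 := hcostRC ν2 h2
    refine ⟨fun ω => if cost p (ν1 ω) ≤ cost p (ν2 ω) then ν1 ω else ν2 ω,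
      ⟨⟨?_, ?_⟩, ?_⟩, ?_⟩
    · intro ω
      try dsimp only
      by_cases h : cost p (ν1 ω) ≤ cost p (ν2 ω)
      · rw [if_pos h]; exact h1.1.1 ω
      · rw [if_neg h]; exact h2.1.1 ω
    · intro B hB
      simp only [apply_ite (fun μ : Measure (Euc d × Euc d) => μ B)]
      exact Measurable.ite (measurableSet_le hc1 hc2) (h1.1.2 B hB) (h2.1.2 B hB)
    · filter_upwards [h1.2, h2.2] with ω hω1 hω2
      try dsimp only
      by_cases h : cost p (ν1 ω) ≤ cost p (ν2 ω)
      · rw [if_pos h]; exact hω1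
      · rw [if_neg h]; exact hω2
    · apply Filter.Eventually.of_forall
      intro ω
      try dsimp only
      by_cases h : cost p (ν1 ω) ≤ cost p (ν2 ω)
      · rw [if_pos h]; exact le_inf le_rfl h
      · rw [if_neg h]; exact le_inf (not_le.mp h).le le_rfl
  · intro ν hν
    filter_upwards [hν.2] with ω hω
    exact S11.Wpp_le_cost p (ξ ω) (η ω) ⟨hν.1.1 ω, hω.1, hω.2⟩
  · intro gg hgg
    have hall : ∀ᵐ ω ∂P, ∀ k : S11.Pln d, gg ω ≤ cost p (nu k ω) :=
      ae_all_iff.mpr fun k => hgg (nu k) (hnuRC k)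
    filter_upwards [hall] with ω hω
    rw [← hkey ω]
    exact le_iInf hω
  · obtain ⟨enum, henum⟩ := exists_surjective_nat (S11.Pln d)
    set seq : ℕ → Ω → Measure (Euc d × Euc d) := fun n => Nat.rec (nu (enum 0))
      (fun m prev => fun ω =>
        if cost p (prev ω) ≤ cost p (nu (enum (m + 1)) ω) then prev ω
        else nu (enum (m + 1)) ω) n with hseqdef
    have hstep : ∀ m ω, seq (m + 1) ω =
        if cost p (seq m ω) ≤ cost p (nu (enum (m + 1)) ω) then seq m ω
        else nu (enum (m + 1)) ω := fun m ω => rfl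
    have hseq_eq : ∀ m ω, ∃ k, seq m ω = nu k ω := by
      intro m
      induction m with
      | zero => exact fun ω => ⟨enum 0, rfl⟩
      | succ m ih =>
        intro ω
        rw [hstep m ω]
        by_cases h : cost p (seq m ω) ≤ cost p (nu (enum (m + 1)) ω)
        · obtain ⟨k, hk⟩ := ih ω
          exact ⟨k, by rw [if_pos h]; exact hk⟩
        · exact ⟨enum (m + 1), by rw [if_neg h]⟩
    have hseq_meas : ∀ m, Measurable[G] (seq m) := by
      intro m
      induction m with
      | zero => exact hnum (enum 0)
      | succ m ih =>
        have : (seq (m + 1)) = fun ω =>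
            if cost p (seq m ω) ≤ cost p (nu (enum (m + 1)) ω) then seq m ω
            else nu (enum (m + 1)) ω := funext fun ω => hstep m ω
        rw [this]
        exact Measurable.ite (measurableSet_le (hcostm _ ih) (hcostm _ (hnum _))) ih (hnum _)
    have hseqRC : ∀ m, @IsRandomCoupling Ω mΩ d P G ξ η (seq m) := by
      intro m
      refine ⟨⟨fun ω => ?_, fun B hB => (Measure.measurable_coe hB).comp (hseq_meas m)⟩,
        Filter.Eventually.of_forall fun ω => ?_⟩
      · obtain ⟨k, hk⟩ := hseq_eq m ω
        rw [hk]; exact hnuP k ω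
      · obtain ⟨k, hk⟩ := hseq_eq m ω
        rw [hk]; exact ⟨hnufst k ω, hnusnd k ω⟩
    have hanti : ∀ ω, Antitone fun m => cost p (seq m ω) := by
      intro ω
      apply antitone_nat_of_succ_le
      intro m
      rw [hstep m ω]
      by_cases h : cost p (seq m ω) ≤ cost p (nu (enum (m + 1)) ω)
      · rw [if_pos h]
      · rw [if_neg h]; exact (not_le.mp h).le
    have hle_enum : ∀ m ω, cost p (seq m ω) ≤ cost p (nu (enum m) ω) := by
      intro m ω
      cases m with
      | zero => exact le_rfl
      | succ m =>
        rw [hstep m ω]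
        by_cases h : cost p (seq m ω) ≤ cost p (nu (enum (m + 1)) ω)
        · rw [if_pos h]; exact h
        · rw [if_neg h]
    have hiInf : ∀ ω, (⨅ m : ℕ, cost p (seq m ω)) = Wpp p (ξ ω) (η ω) := by
      intro ω
      apply le_antisymm
      · rw [← hkey ω]
        refine le_iInf fun k => ?_
        obtain ⟨m, hm⟩ := henum k
        refine le_trans (iInf_le _ m) ?_
        rw [← hm]
        exact hle_enum m ω
      · refine le_iInf fun m => ?_
        obtain ⟨k, hk⟩ := hseq_eq m ω
        rw [hk]
        exact S11.Wpp_le_cost p (ξ ω) (η ω) ⟨hnuP k ω, hnufst k ω, hnusnd k ω⟩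
    refine ⟨seq, hseqRC, Filter.Eventually.of_forall fun ω => ⟨hanti ω, ?_⟩⟩
    rw [← hiInf ω]
    exact tendsto_atTop_iInf (hanti ω)
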